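/- arXiv:quant-ph/9804043 — 7 statements merged into one kernel-verified Lean document; each statement's English description precedes it below -/
import Mathlib

section
/- For any classical random access encoding of m bits into n bits with success probability p > 1/2 (i.e., a possibly probabilistic function f from {0,1}^m to {0,1}^n together with m probabilistic decoding functions such that for every input string b and every index i, the i-th decoding function applied to f(b) outputs b_i with probability at least p), we have n ≥ (1 - H(p))·m, where H(p) = -p·log₂(p) - (1-p)·log₂(1-p) is the binary entropy function. -/
open Real Finset

/-- Gibbs' inequality, sum form. -/
lemma my_gibbs {ι : Type*} [Fintype ι] (P Q : ι → ℝ) (hP : ∀ i, 0 ≤ P i)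
    (hQ : ∀ i, 0 ≤ Q i) (hQP : ∀ i, Q i = 0 → P i = 0)
    (hsum : ∑ i, Q i ≤ ∑ i, P i) :
    ∑ i, P i * Real.log (Q i / P i) ≤ 0 := by
  calc ∑ i, P i * Real.log (Q i / P i) ≤ ∑ i, (Q i - P i) := by
        apply Finset.sum_le_sum; intro i _
        rcases eq_or_lt_of_le (hP i) with h0 | h0
        · simp [← h0, hQ i]
        · have hQi : 0 < Q i := by
            rcases eq_or_lt_of_le (hQ i) with hq | hq
            · exact absurd (hQP i hq.symm) (by linarith)
            · exact hq
          have hlog := Real.log_le_sub_one_of_pos (show (0:ℝ) < Q i / P i by positivity)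
          have := mul_le_mul_of_nonneg_left hlog (le_of_lt h0)
          calc P i * Real.log (Q i / P i) ≤ P i * (Q i / P i - 1) := this
            _ = Q i - P i := by field_simp
    _ ≤ 0 := by rw [Finset.sum_sub_distrib]; linarith

/-- Entropy is at most log of the cardinality. -/
lemma my_ent_le_log_card {ι : Type*} [Fintype ι] [Nonempty ι] (P : ι → ℝ)
    (h0 : ∀ i, 0 ≤ P i) (h1 : ∑ i, P i = 1) :
    ∑ i, Real.negMulLog (P i) ≤ Real.log (Fintype.card ι) := by
  have hcard : (0:ℝ) < (Fintype.card ι : ℝ) := by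
    exact_mod_cast Fintype.card_pos
  have hg := my_gibbs P (fun _ => ((Fintype.card ι : ℝ))⁻¹) h0
    (fun _ => by positivity)
    (fun i h => absurd h (by positivity))
    (by simp [Finset.sum_const, h1, Finset.card_univ, nsmul_eq_mul, mul_inv_cancel₀ hcard.ne'])
  have key : ∀ i, Real.negMulLog (P i)
      = P i * Real.log (((Fintype.card ι : ℝ))⁻¹ / P i) + Real.log (Fintype.card ι) * P i := by
    intro i
    rcases eq_or_lt_of_le (h0 i) with h | h
    · simp [← h]
    · rw [Real.log_div (by positivity) (ne_of_gt h), Real.log_inv, Real.negMulLog]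
      ring
  calc ∑ i, Real.negMulLog (P i)
      = (∑ i, P i * Real.log (((Fintype.card ι : ℝ))⁻¹ / P i))
        + Real.log (Fintype.card ι) * ∑ i, P i := by
        rw [Finset.mul_sum, ← Finset.sum_add_distrib]
        exact Finset.sum_congr rfl (fun i _ => key i)
    _ ≤ Real.log (Fintype.card ι) := by rw [h1]; linarith [hg]

/-- Subadditivity of entropy for a distribution on m bits. -/
lemma my_subadd {m : ℕ} (pr : (Fin m → Bool) → ℝ) (h0 : ∀ b, 0 ≤ pr b)
    (h1 : ∑ b, pr b = 1) :
    ∑ b, Real.negMulLog (pr b)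
      ≤ ∑ i, Real.binEntropy (∑ b, if b i then pr b else 0) := by
  set pi1 : Fin m → ℝ := fun i => ∑ b, if b i then pr b else 0 with hpi1
  have hpi1nn : ∀ i, 0 ≤ pi1 i :=
    fun i => Finset.sum_nonneg (fun b _ => by by_cases h : b i <;> simp [h, h0 b])
  have hcompl : ∀ i, (1:ℝ) - pi1 i = ∑ b', if b' i then 0 else pr b' := by
    intro i
    rw [hpi1, sub_eq_iff_eq_add, ← h1, ← Finset.sum_add_distrib]
    exact Finset.sum_congr rfl (fun b' _ => by by_cases h : b' i <;> simp [h])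
  have hfac : ∀ (b : Fin m → Bool) i,
      pr b ≤ (if b i then pi1 i else 1 - pi1 i) := by
    intro b i
    by_cases hbi : b i
    · simp only [hbi, if_true, hpi1]
      refine le_trans (le_of_eq ?_) (Finset.single_le_sum (f := fun b' => if b' i then pr b' else 0)
        (fun b' _ => by by_cases h : b' i <;> simp [h, h0 b']) (Finset.mem_univ b))
      simp [hbi]
    · simp only [hbi, if_false, hcompl i]
      refine le_trans (le_of_eq ?_) (Finset.single_le_sum (f := fun b' => if b' i then 0 else pr b')
        (fun b' _ => by by_cases h : b' i <;> simp [h, h0 b']) (Finset.mem_univ b))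
      simp [hbi]
  have hfacnn : ∀ (b : Fin m → Bool) i, (0:ℝ) ≤ (if b i then pi1 i else 1 - pi1 i) := by
    intro b i; exact le_trans (h0 b) (hfac b i)
  set Q : (Fin m → Bool) → ℝ := fun b => ∏ i, (if b i then pi1 i else 1 - pi1 i) with hQdef
  have hQnn : ∀ b, 0 ≤ Q b := fun b => Finset.prod_nonneg (fun i _ => hfacnn b i)
  have hQP : ∀ b, Q b = 0 → pr b = 0 := by
    intro b hQ0
    rcases Finset.prod_eq_zero_iff.mp hQ0 with ⟨i, _, hi⟩
    exact le_antisymm (hi ▸ hfac b i) (h0 b)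
  have hQsum : ∑ b, Q b = 1 := by
    rw [hQdef]
    have := Finset.sum_prod_piFinset (κ := Bool) (ι := Fin m) Finset.univ
      (fun i x => if x then pi1 i else 1 - pi1 i)
    rw [Fintype.piFinset_univ] at this
    rw [show (fun b : Fin m → Bool => ∏ i, (if b i then pi1 i else 1 - pi1 i))
      = fun b => ∏ i, (fun (i : Fin m) (x : Bool) => if x then pi1 i else 1 - pi1 i) i (b i) from rfl]
    rw [this]
    simp
  have hg := my_gibbs pr Q h0 hQnn hQP (by rw [hQsum, h1])
  -- termwise: pr b * log (Q b / pr b) = negMulLog (pr b) + pr b * log (Q b)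
  have key1 : ∀ b, pr b * Real.log (Q b / pr b)
      = Real.negMulLog (pr b) + pr b * Real.log (Q b) := by
    intro b
    rcases eq_or_lt_of_le (h0 b) with h | h
    · simp [← h]
    · have hQb : 0 < Q b := by
        rcases eq_or_lt_of_le (hQnn b) with hq | hq
        · exact absurd (hQP b hq.symm) (by linarith)
        · exact hq
      rw [Real.log_div hQb.ne' h.ne', Real.negMulLog]
      ring
  have step1 : ∑ b, Real.negMulLog (pr b) ≤ ∑ b, pr b * (- Real.log (Q b)) := by
    have : ∑ b, pr b * Real.log (Q b / pr b)
        = ∑ b, Real.negMulLog (pr b) + ∑ b, pr b * Real.log (Q b) := by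
      rw [← Finset.sum_add_distrib]; exact Finset.sum_congr rfl (fun b _ => key1 b)
    have h2 : ∑ b, pr b * (- Real.log (Q b)) = - ∑ b, pr b * Real.log (Q b) := by
      rw [← Finset.sum_neg_distrib]; exact Finset.sum_congr rfl (fun b _ => by ring)
    linarith
  -- now compute ∑ b, pr b * (- log (Q b))
  have key2 : ∀ b, pr b * (- Real.log (Q b))
      = ∑ i, pr b * (- Real.log (if b i then pi1 i else 1 - pi1 i)) := by
    intro b
    rcases eq_or_lt_of_le (h0 b) with h | h
    · simp [← h]
    · have hfpos : ∀ i ∈ Finset.univ, (if b i then pi1 i else 1 - pi1 i) ≠ (0:ℝ) := by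
        intro i _ hi
        exact absurd (le_antisymm (hi ▸ hfac b i) (h0 b)) h.ne'
      rw [hQdef]
      rw [Real.log_prod hfpos]
      simp [Finset.mul_sum, mul_neg, Finset.sum_neg_distrib]
  have step2 : ∑ b, pr b * (- Real.log (Q b))
      = ∑ i, ∑ b, pr b * (- Real.log (if b i then pi1 i else 1 - pi1 i)) := by
    rw [← Finset.sum_comm]
    exact Finset.sum_congr rfl (fun b _ => key2 b)
  have step3 : ∀ i, ∑ b, pr b * (- Real.log (if b i then pi1 i else 1 - pi1 i))
      = Real.binEntropy (pi1 i) := by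
    intro i
    have : ∀ b : Fin m → Bool, pr b * (- Real.log (if b i then pi1 i else 1 - pi1 i))
        = (if b i then pr b else 0) * (- Real.log (pi1 i))
          + (if b i then 0 else pr b) * (- Real.log (1 - pi1 i)) := by
      intro b; by_cases h : b i <;> simp [h]
    rw [Finset.sum_congr rfl (fun b _ => this b), Finset.sum_add_distrib,
      ← Finset.sum_mul, ← Finset.sum_mul, ← hcompl i]
    rw [Real.binEntropy_eq_negMulLog_add_negMulLog_one_sub, Real.negMulLog, Real.negMulLog]
    ring
  calc ∑ b, Real.negMulLog (pr b) ≤ ∑ b, pr b * (- Real.log (Q b)) := step1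
    _ = ∑ i, ∑ b, pr b * (- Real.log (if b i then pi1 i else 1 - pi1 i)) := step2
    _ = ∑ i, Real.binEntropy (pi1 i) := Finset.sum_congr rfl (fun i _ => step3 i)

/-- Binary entropy function (base 2). -/
noncomputable def binEnt (p : ℝ) : ℝ :=
  -(p * Real.logb 2 p) - (1 - p) * Real.logb 2 (1 - p)

lemma my_binEnt_eq (p : ℝ) : binEnt p * Real.log 2 = Real.binEntropy p := by
  have h2 : Real.log 2 ≠ 0 := (Real.log_pos one_lt_two).ne'
  rw [binEnt, Real.binEntropy, Real.log_inv, Real.log_inv, Real.logb, Real.logb]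
  field_simp
  ring

/-- Lower bound for classical random access encodings:
any (m,n,p) classical encoding with p > 1/2 satisfies n ≥ (1 - H(p))·m. -/
theorem classical_rac_lower_bound
    (m n : ℕ) (p : ℝ) (hp : 1 / 2 < p)
    (R R' : Type) [Fintype R] [Fintype R']
    (μ : R → ℝ) (μ' : R' → ℝ)
    (hμ0 : ∀ r, 0 ≤ μ r) (hμ1 : ∑ r, μ r = 1)
    (hμ'0 : ∀ r', 0 ≤ μ' r') (hμ'1 : ∑ r', μ' r' = 1)
    (f : (Fin m → Bool) → R → (Fin n → Bool))
    (V : Fin m → (Fin n → Bool) → R' → Bool)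
    (hdec : ∀ (b : Fin m → Bool) (i : Fin m),
      p ≤ ∑ r : R, ∑ r' : R',
        (if V i (f b r) r' = b i then μ r * μ' r' else 0)) :
    (1 - binEnt p) * m ≤ (n : ℝ) := by
  rcases Nat.eq_zero_or_pos m with hm | hm
  · subst hm; simp
  have hlog2 : (0:ℝ) < Real.log 2 := Real.log_pos one_lt_two
  have i0 : Fin m := ⟨0, hm⟩
  have hp1 : p ≤ 1 := by
    refine le_trans (hdec (fun _ => true) i0) ?_
    calc ∑ r : R, ∑ r' : R', (if V i0 (f (fun _ => true) r) r' = (fun _ => true) i0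
            then μ r * μ' r' else 0)
        ≤ ∑ r : R, ∑ r' : R', μ r * μ' r' := by
          refine Finset.sum_le_sum (fun r _ => Finset.sum_le_sum (fun r' _ => ?_))
          have : 0 ≤ μ r * μ' r' := mul_nonneg (hμ0 r) (hμ'0 r')
          split <;> simp [this]
      _ = 1 := by
          simp only [← Finset.mul_sum, hμ'1, mul_one, hμ1]
  set M : ℝ := (2:ℝ)^m with hM
  have hMpos : (0:ℝ) < M := by positivity
  set P : (Fin m → Bool) → (Fin n → Bool) → ℝ :=
    fun b y => (∑ r, if f b r = y then μ r else 0) / M with hPdef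
  have hP0 : ∀ b y, 0 ≤ P b y := by
    intro b y
    apply div_nonneg _ hMpos.le
    exact Finset.sum_nonneg (fun r _ => by split <;> simp [hμ0 r])
  have hProw : ∀ b, ∑ y, P b y = M⁻¹ := by
    intro b
    rw [hPdef, ← Finset.sum_div, Finset.sum_comm]
    have : ∀ r, ∑ y, (if f b r = y then μ r else 0) = μ r := by
      intro r
      rw [Finset.sum_ite_eq Finset.univ (f b r) (fun _ => μ r)]
      simp
    rw [Finset.sum_congr rfl (fun r _ => this r), hμ1, one_div]
  set PY : (Fin n → Bool) → ℝ := fun y => ∑ b, P b y with hPYdef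
  have hPY0 : ∀ y, 0 ≤ PY y := fun y => Finset.sum_nonneg (fun b _ => hP0 b y)
  have cardB : ((Fintype.card (Fin m → Bool)) : ℝ) = M := by
    simp [hM]
  have hPYsum : ∑ y, PY y = 1 := by
    rw [hPYdef, Finset.sum_comm]
    rw [Finset.sum_congr rfl (fun b _ => hProw b), Finset.sum_const, Finset.card_univ,
      nsmul_eq_mul, cardB, mul_inv_cancel₀ hMpos.ne']
  have hPle : ∀ b y, P b y ≤ PY y := by
    intro b y
    exact Finset.single_le_sum (f := fun b' => P b' y) (fun b' _ => hP0 b' y)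
      (Finset.mem_univ b)
  set A : Fin m → (Fin n → Bool) → ℝ := fun i y => ∑ b, if b i then P b y else 0 with hAdef
  have hA0 : ∀ i y, 0 ≤ A i y := fun i y =>
    Finset.sum_nonneg (fun b _ => by split <;> simp [hP0 b y])
  have hAle : ∀ i y, A i y ≤ PY y := by
    intro i y
    apply Finset.sum_le_sum (fun b _ => ?_)
    split <;> simp [hP0 b y]
  set q : Fin m → (Fin n → Bool) → ℝ := fun i y => A i y / PY y with hqdef
  have hq0 : ∀ i y, 0 ≤ q i y := fun i y => div_nonneg (hA0 i y) (hPY0 y)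
  have hq1 : ∀ i y, q i y ≤ 1 := by
    intro i y
    rcases eq_or_lt_of_le (hPY0 y) with h | h
    · have : A i y = 0 := le_antisymm (h ▸ hAle i y) (hA0 i y)
      simp [hqdef, this]
    · exact div_le_one_of_le₀ (hAle i y) (hPY0 y)
  have hPYq : ∀ i y, PY y * q i y = A i y := by
    intro i y
    rcases eq_or_lt_of_le (hPY0 y) with h | h
    · have : A i y = 0 := le_antisymm (h ▸ hAle i y) (hA0 i y)
      simp [← h, this]
    · rw [hqdef]; field_simp
  set HY : ℝ := ∑ y, Real.negMulLog (PY y) with hHY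
  set HBY : ℝ := ∑ y, ∑ b, P b y * Real.log (PY y / P b y) with hHBY
  have step1 : HY ≤ n * Real.log 2 := by
    have h := my_ent_le_log_card PY hPY0 hPYsum
    have : Real.log (Fintype.card (Fin n → Bool)) = n * Real.log 2 := by
      have : ((Fintype.card (Fin n → Bool)) : ℝ) = (2:ℝ)^n := by simp
      rw [this, Real.log_pow]
    rwa [this] at h
  have step2 : (m:ℝ) * Real.log 2 ≤ HY + HBY := by
    set HYB : ℝ := ∑ y, ∑ b, P b y * Real.log (M⁻¹ / P b y) with hHYB
    have hHYBnn : 0 ≤ HYB := by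
      rw [hHYB]
      refine Finset.sum_nonneg (fun y _ => Finset.sum_nonneg (fun b _ => ?_))
      rcases eq_or_lt_of_le (hP0 b y) with h | h
      · simp [← h]
      · have hle : P b y ≤ M⁻¹ := by
          rw [← hProw b]
          exact Finset.single_le_sum (f := fun y' => P b y') (fun y' _ => hP0 b y')
            (Finset.mem_univ y)
        have : (1:ℝ) ≤ M⁻¹ / P b y := (one_le_div h).mpr hle
        exact mul_nonneg h.le (Real.log_nonneg this)
    have key : ∀ y b, P b y * Real.log (PY y / P b y) - P b y * Real.log (M⁻¹ / P b y)
        = P b y * Real.log (PY y) - P b y * Real.log M⁻¹ := by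
      intro y b
      rcases eq_or_lt_of_le (hP0 b y) with h | h
      · simp [← h]
      · have hPYpos : 0 < PY y := lt_of_lt_of_le h (hPle b y)
        rw [Real.log_div hPYpos.ne' h.ne', Real.log_div (by positivity) h.ne']
        ring
    have sum1 : ∑ y, ∑ b, P b y * Real.log (PY y) = -HY := by
      rw [hHY, ← Finset.sum_neg_distrib]
      refine Finset.sum_congr rfl (fun y _ => ?_)
      rw [← Finset.sum_mul]
      show PY y * Real.log (PY y) = -(PY y).negMulLog
      simp [Real.negMulLog]
    have sum2 : ∑ y, ∑ b, P b y * Real.log M⁻¹ = -((m:ℝ) * Real.log 2) := by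
      rw [Finset.sum_comm]
      have : ∀ b, ∑ y, P b y * Real.log M⁻¹ = M⁻¹ * Real.log M⁻¹ := by
        intro b; rw [← Finset.sum_mul, hProw b]
      rw [Finset.sum_congr rfl (fun b _ => this b), Finset.sum_const, Finset.card_univ,
        nsmul_eq_mul, cardB, ← mul_assoc, mul_inv_cancel₀ hMpos.ne', one_mul, hM,
        Real.log_inv, Real.log_pow]
    have keysum : HBY - HYB = -HY - (-((m:ℝ) * Real.log 2)) := by
      calc HBY - HYB = ∑ y, ∑ b, (P b y * Real.log (PY y) - P b y * Real.log M⁻¹) := by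
            rw [hHBY, hHYB, ← Finset.sum_sub_distrib]
            refine Finset.sum_congr rfl fun y _ => ?_
            rw [← Finset.sum_sub_distrib]
            exact Finset.sum_congr rfl fun b _ => key y b
        _ = -HY - (-((m:ℝ) * Real.log 2)) := by
            rw [← sum1, ← sum2, ← Finset.sum_sub_distrib]
            exact Finset.sum_congr rfl fun y _ => Finset.sum_sub_distrib _ _
    linarith
  have step3 : HBY ≤ ∑ i, ∑ y, PY y * Real.binEntropy (q i y) := by
    have per_y : ∀ y, ∑ b, P b y * Real.log (PY y / P b y)
        ≤ PY y * ∑ i, Real.binEntropy (q i y) := by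
      intro y
      rcases eq_or_lt_of_le (hPY0 y) with h | h
      · have hz : ∀ b, P b y = 0 := fun b => le_antisymm (h ▸ hPle b y) (hP0 b y)
        rw [← h]
        simp [hz]
      · have hpr0 : ∀ b, 0 ≤ P b y / PY y := fun b => div_nonneg (hP0 b y) h.le
        have hpr1 : ∑ b, P b y / PY y = 1 := by
          rw [← Finset.sum_div]
          exact div_self h.ne'
        have hsub := my_subadd (fun b => P b y / PY y) hpr0 hpr1
        have hmarg : ∀ i : Fin m, (∑ b, if b i then P b y / PY y else 0) = q i y := by
          intro i
          have : ∀ b : Fin m → Bool, (if b i then P b y / PY y else 0)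
              = (if b i then P b y else 0) / PY y := by
            intro b; split <;> simp
          rw [Finset.sum_congr rfl (fun b _ => this b), ← Finset.sum_div]
        have hL : ∑ b, P b y * Real.log (PY y / P b y)
            = PY y * ∑ b, Real.negMulLog (P b y / PY y) := by
          rw [Finset.mul_sum]
          refine Finset.sum_congr rfl fun b _ => ?_
          rcases eq_or_lt_of_le (hP0 b y) with hb | hb
          · simp [← hb]
          · rw [Real.negMulLog, Real.log_div h.ne' hb.ne', Real.log_div hb.ne' h.ne']
            field_simp
            ring
        rw [hL]
        refine mul_le_mul_of_nonneg_left ?_ h.le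
        refine le_trans hsub (le_of_eq ?_)
        exact Finset.sum_congr rfl fun i _ => by rw [hmarg i]
    calc HBY ≤ ∑ y, PY y * ∑ i, Real.binEntropy (q i y) := by
          rw [hHBY]; exact Finset.sum_le_sum fun y _ => per_y y
      _ = ∑ i, ∑ y, PY y * Real.binEntropy (q i y) := by
          rw [Finset.sum_comm]
          exact Finset.sum_congr rfl fun y _ => Finset.mul_sum _ _ _
  have step4 : ∀ i, ∑ y, PY y * Real.binEntropy (q i y) ≤ Real.binEntropy p := by
    intro i
    set e : (Fin n → Bool) → R' → ℝ :=
      fun y r' => if V i y r' = true then 1 - q i y else q i y with hedef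
    have he0 : ∀ y r', 0 ≤ e y r' := by
      intro y r'; rw [hedef]; dsimp only; split
      · linarith [hq1 i y]
      · exact hq0 i y
    have he1 : ∀ y r', e y r' ≤ 1 := by
      intro y r'; rw [hedef]; dsimp only; split
      · linarith [hq0 i y]
      · exact hq1 i y
    set S : ℝ := ∑ y, ∑ r', μ' r' * (if V i y r' = true then A i y else PY y - A i y)
      with hSdef
    have hS : p ≤ S := by
      have hAeq : ∀ (y : Fin n → Bool) (r' : R'),
          (if V i y r' = true then A i y else PY y - A i y)
          = ∑ b, (if V i y r' = b i then P b y else 0) := by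
        intro y r'
        cases hv : V i y r' with
        | true =>
            rw [if_pos rfl, hAdef]
            refine Finset.sum_congr rfl fun b _ => ?_
            cases hb : b i <;> simp [hb]
        | false =>
            rw [if_neg (by simp)]
            have h1 : PY y - A i y = ∑ b, if b i then 0 else P b y := by
              rw [show PY y = ∑ b, P b y from rfl, hAdef, ← Finset.sum_sub_distrib]
              refine Finset.sum_congr rfl fun b _ => ?_
              cases hb : b i <;> simp [hb]
            rw [h1]
            refine Finset.sum_congr rfl fun b _ => ?_
            cases hb : b i <;> simp [hb]
      have hS2 : S = ∑ b, (∑ r, ∑ r', (if V i (f b r) r' = b i then μ r * μ' r' else 0)) / M := by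
        calc S = ∑ y, ∑ r', ∑ b, μ' r' * (if V i y r' = b i then P b y else 0) := by
              rw [hSdef]
              exact Finset.sum_congr rfl fun y _ => Finset.sum_congr rfl fun r' _ => by
                rw [hAeq y r', Finset.mul_sum]
          _ = ∑ y, ∑ b, ∑ r', μ' r' * (if V i y r' = b i then P b y else 0) :=
              Finset.sum_congr rfl fun y _ => Finset.sum_comm
          _ = ∑ b, ∑ y, ∑ r', μ' r' * (if V i y r' = b i then P b y else 0) :=
              Finset.sum_comm
          _ = ∑ b, (∑ r, ∑ r', (if V i (f b r) r' = b i then μ r * μ' r' else 0)) / M := by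
              refine Finset.sum_congr rfl fun b _ => ?_
              calc ∑ y, ∑ r', μ' r' * (if V i y r' = b i then P b y else 0)
                  = ∑ y, ∑ r', ∑ r,
                      (if f b r = y then (if V i y r' = b i then μ r * μ' r' else 0) else 0) / M := by
                    refine Finset.sum_congr rfl fun y _ => Finset.sum_congr rfl fun r' _ => ?_
                    by_cases hc : V i y r' = b i
                    · simp only [if_pos hc]
                      rw [show P b y = (∑ r, if f b r = y then μ r else 0) / M from rfl,
                        mul_div_assoc', Finset.mul_sum, ← Finset.sum_div]
                      congr 1
                      exact Finset.sum_congr rfl fun r _ => by split <;> ring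
                    · simp [if_neg hc]
                _ = ∑ y, ∑ r, ∑ r',
                      (if f b r = y then (if V i y r' = b i then μ r * μ' r' else 0) else 0) / M :=
                    Finset.sum_congr rfl fun y _ => Finset.sum_comm
                _ = ∑ r, ∑ y, ∑ r',
                      (if f b r = y then (if V i y r' = b i then μ r * μ' r' else 0) else 0) / M :=
                    Finset.sum_comm
                _ = ∑ r, ∑ r', ∑ y,
                      (if f b r = y then (if V i y r' = b i then μ r * μ' r' else 0) else 0) / M :=
                    Finset.sum_congr rfl fun r _ => Finset.sum_comm
                _ = ∑ r, ∑ r', (if V i (f b r) r' = b i then μ r * μ' r' else 0) / M := by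
                    refine Finset.sum_congr rfl fun r _ => Finset.sum_congr rfl fun r' _ => ?_
                    rw [← Finset.sum_div, Finset.sum_ite_eq Finset.univ (f b r)
                      (fun y => if V i y r' = b i then μ r * μ' r' else 0)]
                    simp
                _ = (∑ r, ∑ r', (if V i (f b r) r' = b i then μ r * μ' r' else 0)) / M := by
                    rw [Finset.sum_div]
                    exact Finset.sum_congr rfl fun r _ => (Finset.sum_div _ _ _).symm
      rw [hS2]
      have hlow : ∀ b : Fin m → Bool, p / M
          ≤ (∑ r, ∑ r', (if V i (f b r) r' = b i then μ r * μ' r' else 0)) / M :=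
        fun b => (div_le_div_iff_of_pos_right hMpos).mpr (hdec b i)
      calc p = ↑(Fintype.card (Fin m → Bool)) * (p / M) := by
            rw [cardB]; field_simp
        _ = ∑ b : Fin m → Bool, p / M := by
            rw [Finset.sum_const, Finset.card_univ, nsmul_eq_mul]
        _ ≤ _ := Finset.sum_le_sum fun b _ => hlow b
    set err : ℝ := ∑ y, ∑ r', (PY y * μ' r') * e y r' with herrdef
    have herr1 : err = 1 - S := by
      have hterm : ∀ (y : Fin n → Bool) (r' : R'), (PY y * μ' r') * e y r'
          = μ' r' * PY y - μ' r' * (if V i y r' = true then A i y else PY y - A i y) := by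
        intro y r'
        rw [hedef]; dsimp only
        by_cases hv : V i y r' = true
        · rw [if_pos hv, if_pos hv, ← hPYq i y]; ring
        · rw [if_neg hv, if_neg hv, ← hPYq i y]; ring
      have hone : ∑ y, ∑ r', μ' r' * PY y = 1 := by
        rw [← hPYsum]
        refine Finset.sum_congr rfl fun y _ => ?_
        rw [← Finset.sum_mul, hμ'1, one_mul]
      calc err = ∑ y, ∑ r', (μ' r' * PY y
            - μ' r' * (if V i y r' = true then A i y else PY y - A i y)) := by
            rw [herrdef]
            exact Finset.sum_congr rfl fun y _ => Finset.sum_congr rfl fun r' _ => hterm y r'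
        _ = 1 - S := by
            rw [hSdef, ← hone, ← Finset.sum_sub_distrib]
            exact Finset.sum_congr rfl fun y _ => Finset.sum_sub_distrib _ _
    have herr0 : 0 ≤ err := by
      rw [herrdef]
      refine Finset.sum_nonneg fun y _ => Finset.sum_nonneg fun r' _ => ?_
      exact mul_nonneg (mul_nonneg (hPY0 y) (hμ'0 r')) (he0 y r')
    have hHi : ∑ y, PY y * Real.binEntropy (q i y)
        = ∑ y, ∑ r', (PY y * μ' r') * Real.binEntropy (e y r') := by
      refine Finset.sum_congr rfl fun y _ => ?_
      have hbe : ∀ r', Real.binEntropy (e y r') = Real.binEntropy (q i y) := by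
        intro r'; rw [hedef]; dsimp only; split
        · exact Real.binEntropy_one_sub _
        · rfl
      calc PY y * Real.binEntropy (q i y)
          = (∑ r', μ' r') * (PY y * Real.binEntropy (q i y)) := by rw [hμ'1, one_mul]
        _ = ∑ r', (PY y * μ' r') * Real.binEntropy (e y r') := by
            rw [Finset.sum_mul]
            exact Finset.sum_congr rfl fun r' _ => by rw [hbe r']; ring
    -- Jensen
    have hconc : ConcaveOn ℝ (Set.Icc (0:ℝ) 1) Real.binEntropy :=
      Real.strictConcave_binEntropy.concaveOn
    have hw1 : ∑ z : (Fin n → Bool) × R', PY z.1 * μ' z.2 = 1 := by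
      have hy : ∀ y : Fin n → Bool, ∑ r', PY y * μ' r' = PY y := fun y => by
        rw [← Finset.mul_sum, hμ'1, mul_one]
      rw [Fintype.sum_prod_type]
      calc (∑ y : Fin n → Bool, ∑ r', PY y * μ' r') = ∑ y, PY y :=
            Finset.sum_congr rfl fun y _ => hy y
        _ = 1 := hPYsum
    have hjen := hconc.le_map_sum (t := (Finset.univ : Finset ((Fin n → Bool) × R')))
      (w := fun z => PY z.1 * μ' z.2) (p := fun z => e z.1 z.2)
      (fun z _ => mul_nonneg (hPY0 z.1) (hμ'0 z.2))
      hw1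
      (fun z _ => ⟨he0 z.1 z.2, he1 z.1 z.2⟩)
    have hL : ∑ z : (Fin n → Bool) × R', (PY z.1 * μ' z.2) • Real.binEntropy (e z.1 z.2)
        = ∑ y, ∑ r', (PY y * μ' r') * Real.binEntropy (e y r') := by
      rw [Fintype.sum_prod_type]
      exact Finset.sum_congr rfl fun y _ => Finset.sum_congr rfl fun r' _ => by rw [smul_eq_mul]
    have hR : ∑ z : (Fin n → Bool) × R', (PY z.1 * μ' z.2) • e z.1 z.2 = err := by
      rw [Fintype.sum_prod_type, herrdef]
      exact Finset.sum_congr rfl fun y _ => Finset.sum_congr rfl fun r' _ => by rw [smul_eq_mul]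
    have hmono : Real.binEntropy err ≤ Real.binEntropy (1 - p) := by
      have h1 : err ∈ Set.Icc (0:ℝ) 2⁻¹ := ⟨herr0, by rw [herr1]; linarith⟩
      have h2 : (1 - p) ∈ Set.Icc (0:ℝ) 2⁻¹ := ⟨by linarith, by linarith⟩
      exact Real.binEntropy_strictMonoOn.monotoneOn h1 h2 (by rw [herr1]; linarith)
    calc ∑ y, PY y * Real.binEntropy (q i y)
        = ∑ y, ∑ r', (PY y * μ' r') * Real.binEntropy (e y r') := hHi
      _ = ∑ z : (Fin n → Bool) × R', (PY z.1 * μ' z.2) • Real.binEntropy (e z.1 z.2) := hL.symm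
      _ ≤ Real.binEntropy (∑ z : (Fin n → Bool) × R', (PY z.1 * μ' z.2) • e z.1 z.2) := hjen
      _ = Real.binEntropy err := by rw [hR]
      _ ≤ Real.binEntropy (1 - p) := hmono
      _ = Real.binEntropy p := Real.binEntropy_one_sub p
  have final : (m:ℝ) * Real.log 2 ≤ n * Real.log 2 + m * Real.binEntropy p := by
    calc (m:ℝ) * Real.log 2 ≤ HY + HBY := step2
      _ ≤ n * Real.log 2 + ∑ i, ∑ y, PY y * Real.binEntropy (q i y) := by
          apply add_le_add step1 step3
      _ ≤ n * Real.log 2 + ∑ i : Fin m, Real.binEntropy p := by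
          apply add_le_add (le_refl _) (Finset.sum_le_sum (fun i _ => step4 i))
      _ = n * Real.log 2 + m * Real.binEntropy p := by
          rw [Finset.sum_const, Finset.card_univ, Fintype.card_fin, nsmul_eq_mul]
  rw [← my_binEnt_eq p] at final
  have h2 : (1 - binEnt p) * m * Real.log 2 ≤ (n:ℝ) * Real.log 2 := by nlinarith
  exact le_of_mul_le_mul_right h2 hlog2
end

section
/- Let X be uniformly distributed on {0,1}^m, let Y be any random variable, and let Z = (Z₁,...,Z_m) be a random variable on {0,1}^m obtained as a (possibly randomized) function of Y such that for each i, Prob[Z_i = X_i] ≥ p, where p > 1/2. Then the mutual information I(X:Y) ≥ (1 - H(p))·m, where H is the binary entropy function. -/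
/-- Shannon entropy (base 2) of a probability mass function on a finite type. -/
noncomputable def shannonEnt {A : Type*} [Fintype A] (P : A → ℝ) : ℝ :=
  ∑ a, -(P a * Real.logb 2 (P a))

/-- Mutual information I(X:Y) = S(X) + S(Y) - S(X,Y) of a joint pmf. -/
noncomputable def mutInfo {A B : Type*} [Fintype A] [Fintype B]
    (P : A × B → ℝ) : ℝ :=
  shannonEnt (fun a => ∑ b, P (a, b)) + shannonEnt (fun b => ∑ a, P (a, b))
    - shannonEnt P

/-- Gibbs' inequality (cross entropy bound), natural log version. -/
lemma my_gibbs_log {ι : Type*} [Fintype ι] (a b : ι → ℝ)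
    (ha : ∀ i, 0 ≤ a i) (hb : ∀ i, 0 ≤ b i)
    (hab : ∀ i, a i ≠ 0 → b i ≠ 0)
    (hs : ∑ i, b i ≤ ∑ i, a i) :
    ∑ i, a i * Real.log (b i) ≤ ∑ i, a i * Real.log (a i) := by
  have h : ∀ i : ι, a i * Real.log (b i) - a i * Real.log (a i) ≤ b i - a i := by
    intro i
    rcases eq_or_lt_of_le (ha i) with h0 | h0
    · rw [← h0]; simp [hb i]
    · have hbpos : 0 < b i := lt_of_le_of_ne (hb i) (Ne.symm (hab i (ne_of_gt h0)))
      have hl := Real.log_le_sub_one_of_pos (div_pos hbpos h0)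
      rw [Real.log_div (ne_of_gt hbpos) (ne_of_gt h0)] at hl
      have hm := mul_le_mul_of_nonneg_left hl (le_of_lt h0)
      have he : a i * (b i / a i - 1) = b i - a i := by field_simp
      nlinarith [hm]
  have h2 := Finset.sum_le_sum (fun i (_ : i ∈ Finset.univ) => h i)
  rw [Finset.sum_sub_distrib, Finset.sum_sub_distrib] at h2
  linarith

/-- Gibbs' inequality, base-2 log version. -/
lemma my_gibbs_s1 {ι : Type*} [Fintype ι] (a b : ι → ℝ)
    (ha : ∀ i, 0 ≤ a i) (hb : ∀ i, 0 ≤ b i)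
    (hab : ∀ i, a i ≠ 0 → b i ≠ 0)
    (hs : ∑ i, b i ≤ ∑ i, a i) :
    ∑ i, a i * Real.logb 2 (b i) ≤ ∑ i, a i * Real.logb 2 (a i) := by
  have hlog2 : (0:ℝ) < Real.log 2 := Real.log_pos one_lt_two
  have key := my_gibbs_log a b ha hb hab hs
  simp only [Real.logb, ← mul_div_assoc]
  rw [← Finset.sum_div, ← Finset.sum_div]
  exact div_le_div_of_nonneg_right key hlog2.le

lemma aux_ent_bound {p s : ℝ} (hp : 1 / 2 < p) (hp1 : p ≤ 1) (hs : p ≤ s) :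
    -(s * Real.logb 2 p + (1 - s) * Real.logb 2 (1 - p)) ≤ binEnt p := by
  have hcd : Real.logb 2 (1 - p) ≤ Real.logb 2 p := by
    rcases eq_or_lt_of_le hp1 with h | h
    · rw [h]; norm_num
    · exact Real.logb_le_logb_of_le one_lt_two (by linarith) (by linarith)
  have hprod : 0 ≤ (s - p) * (Real.logb 2 p - Real.logb 2 (1 - p)) :=
    mul_nonneg (by linarith) (by linarith)
  simp only [binEnt]
  nlinarith [hprod]

lemma sum3 {α β γ : Type*} [Fintype α] [Fintype β] [Fintype γ] (F : (α × β) × γ → ℝ) :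
    ∑ t, F t = ∑ x, ∑ y, ∑ z, F ((x, y), z) := by
  rw [Fintype.sum_prod_type, Fintype.sum_prod_type]

noncomputable def auxMu (p : ℝ) (s t : Bool) : ℝ := if s = t then p else 1 - p

noncomputable def auxM {m : ℕ} (p : ℝ) (x z : Fin m → Bool) : ℝ := ∏ i, auxMu p (x i) (z i)

lemma auxM_sum {m : ℕ} (p : ℝ) (z : Fin m → Bool) : ∑ x, auxM p x z = 1 := by
  unfold auxM
  rw [← Fintype.prod_sum (fun (i : Fin m) (s : Bool) => auxMu p s (z i))]
  apply Finset.prod_eq_one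
  intro i _
  rw [Fintype.sum_bool]
  cases h : z i <;> simp [auxMu]

/-- If X is uniform on {0,1}^m, Y is any random variable (joint pmf P), and
Z is a randomized function of Y (channel W) with Prob[Z_i = X_i] ≥ p > 1/2 for
each i, then I(X:Y) ≥ (1 - H(p))·m. -/
theorem mutual_info_lower_bound
    (m : ℕ) (p : ℝ) (hp : 1 / 2 < p)
    (B : Type) [Fintype B]
    (P : (Fin m → Bool) × B → ℝ)
    (hP0 : ∀ z, 0 ≤ P z) (hP1 : ∑ z, P z = 1)
    (hX : ∀ x : Fin m → Bool, ∑ y, P (x, y) = 1 / 2 ^ m)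
    (W : B → (Fin m → Bool) → ℝ)
    (hW0 : ∀ y z, 0 ≤ W y z) (hW1 : ∀ y, ∑ z, W y z = 1)
    (hZ : ∀ i : Fin m,
      p ≤ ∑ x, ∑ y, ∑ z, (if z i = x i then P (x, y) * W y z else 0)) :
    (1 - binEnt p) * m ≤ mutInfo P := by
  classical
  have hp0 : (0:ℝ) < p := by linarith
  -- total mass of the joint distribution of (X, Y, Z), flat form
  have haF : ∑ t : ((Fin m → Bool) × B) × (Fin m → Bool), P t.1 * W t.1.2 t.2 = 1 := by
    rw [sum3]
    have h1 : ∀ (x : Fin m → Bool) (y : B), ∑ z, P (x, y) * W y z = P (x, y) := fun x y => by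
      rw [← Finset.mul_sum, hW1, mul_one]
    calc ∑ x, ∑ y, ∑ z, P (x, y) * W y z = ∑ x, ∑ y, P (x, y) :=
          Finset.sum_congr rfl fun x _ => Finset.sum_congr rfl fun y _ => h1 x y
      _ = 1 := by rw [← Fintype.sum_prod_type (f := P)]; exact hP1
  have hZF : ∀ i : Fin m, p ≤ ∑ t : ((Fin m → Bool) × B) × (Fin m → Bool),
      (if t.2 i = t.1.1 i then P t.1 * W t.1.2 t.2 else 0) := by
    intro i; rw [sum3]; exact hZ i
  have hq1 : ∀ i : Fin m, (∑ t : ((Fin m → Bool) × B) × (Fin m → Bool),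
      (if t.2 i = t.1.1 i then P t.1 * W t.1.2 t.2 else 0)) ≤ 1 := by
    intro i
    rw [← haF]
    apply Finset.sum_le_sum
    intro t _
    split
    · exact le_rfl
    · exact mul_nonneg (hP0 _) (hW0 _ _)
  have hple1 : ∀ _i : Fin m, p ≤ 1 := fun i => le_trans (hZF i) (hq1 i)
  have hPY0 : ∀ y : B, 0 ≤ ∑ x, P (x, y) := fun y => Finset.sum_nonneg fun x _ => hP0 _
  have hPYpos : ∀ (x : Fin m → Bool) (y : B), P (x, y) ≠ 0 → 0 < ∑ x', P (x', y) := by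
    intro x y h
    have h1 : P (x, y) ≤ ∑ x', P (x', y) :=
      Finset.single_le_sum (f := fun x' => P (x', y)) (fun x' _ => hP0 _) (Finset.mem_univ x)
    exact lt_of_lt_of_le (lt_of_le_of_ne (hP0 _) (Ne.symm h)) h1
  have hμpos : ∀ (x z : Fin m → Bool) (y : B), P (x, y) ≠ 0 → W y z ≠ 0 →
      ∀ i, 0 < auxMu p (x i) (z i) := by
    intro x z y hPne hWne i
    unfold auxMu
    by_cases hxz : x i = z i
    · rw [if_pos hxz]; exact hp0
    · rw [if_neg hxz]
      rcases lt_or_eq_of_le (hple1 i) with h | h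
      · linarith
      · exfalso
        have hterm : 0 < P (x, y) * W y z :=
          mul_pos (lt_of_le_of_ne (hP0 _) (Ne.symm hPne)) (lt_of_le_of_ne (hW0 _ _) (Ne.symm hWne))
        have hlt : (∑ t : ((Fin m → Bool) × B) × (Fin m → Bool),
            (if t.2 i = t.1.1 i then P t.1 * W t.1.2 t.2 else 0)) <
            ∑ t : ((Fin m → Bool) × B) × (Fin m → Bool), P t.1 * W t.1.2 t.2 := by
          apply Finset.sum_lt_sum
          · intro t _
            split
            · exact le_rfl
            · exact mul_nonneg (hP0 _) (hW0 _ _)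
          · refine ⟨((x, y), z), Finset.mem_univ _, ?_⟩
            dsimp only
            rw [if_neg (fun hh => hxz hh.symm)]
            exact hterm
        rw [haF] at hlt
        have h2 := hZF i
        linarith
  have hMpos : ∀ (x z : Fin m → Bool) (y : B), P (x, y) ≠ 0 → W y z ≠ 0 → 0 < auxM p x z :=
    fun x z y h1 h2 => Finset.prod_pos fun i _ => hμpos x z y h1 h2 i
  have hM0 : ∀ x z : Fin m → Bool, 0 ≤ auxM p x z := by
    intro x z
    apply Finset.prod_nonneg
    intro i _
    unfold auxMu
    split
    · exact hp0.le
    · have := hple1 i; linarith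
  -- the comparison distribution and Gibbs' inequality
  have hbsum : ∑ t : ((Fin m → Bool) × B) × (Fin m → Bool),
      (∑ x', P (x', t.1.2)) * (W t.1.2 t.2 * auxM p t.1.1 t.2) = 1 := by
    rw [sum3]
    dsimp only
    rw [Finset.sum_comm]
    have h1 : ∀ y : B, ∑ x : Fin m → Bool, ∑ z : Fin m → Bool,
        (∑ x', P (x', y)) * (W y z * auxM p x z) = ∑ x', P (x', y) := by
      intro y
      rw [Finset.sum_comm]
      have h2 : ∀ z : Fin m → Bool, ∑ x : Fin m → Bool,
          (∑ x', P (x', y)) * (W y z * auxM p x z) = (∑ x', P (x', y)) * W y z := by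
        intro z
        rw [← Finset.mul_sum, ← Finset.mul_sum, auxM_sum, mul_one]
      rw [Finset.sum_congr rfl fun z _ => h2 z, ← Finset.mul_sum, hW1, mul_one]
    rw [Finset.sum_congr rfl fun y _ => h1 y, Finset.sum_comm]
    rw [← Fintype.sum_prod_type (f := P)]
    exact hP1
  have hGibbs := my_gibbs_s1
      (fun t : ((Fin m → Bool) × B) × (Fin m → Bool) => P t.1 * W t.1.2 t.2)
      (fun t => (∑ x', P (x', t.1.2)) * (W t.1.2 t.2 * auxM p t.1.1 t.2))
      (fun t => mul_nonneg (hP0 _) (hW0 _ _))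
      (fun t => mul_nonneg (hPY0 _) (mul_nonneg (hW0 _ _) (hM0 _ _)))
      (by
        intro t ht
        obtain ⟨hP', hW'⟩ := mul_ne_zero_iff.mp ht
        exact (mul_pos (hPYpos t.1.1 t.1.2 hP')
          (mul_pos (lt_of_le_of_ne (hW0 _ _) (Ne.symm hW')) (hMpos t.1.1 t.2 t.1.2 hP' hW'))).ne')
      (by rw [hbsum, haF])
  -- split the logs
  have hsplitb : ∑ t : ((Fin m → Bool) × B) × (Fin m → Bool),
      P t.1 * W t.1.2 t.2 * Real.logb 2 ((∑ x', P (x', t.1.2)) * (W t.1.2 t.2 * auxM p t.1.1 t.2))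
      = (∑ t : ((Fin m → Bool) × B) × (Fin m → Bool),
          P t.1 * W t.1.2 t.2 * Real.logb 2 (∑ x', P (x', t.1.2)))
        + ((∑ t : ((Fin m → Bool) × B) × (Fin m → Bool),
            P t.1 * W t.1.2 t.2 * Real.logb 2 (W t.1.2 t.2))
          + ∑ t : ((Fin m → Bool) × B) × (Fin m → Bool),
            P t.1 * W t.1.2 t.2 * Real.logb 2 (auxM p t.1.1 t.2)) := by
    rw [← Finset.sum_add_distrib, ← Finset.sum_add_distrib]
    apply Finset.sum_congr rfl
    intro t _
    by_cases h : P t.1 * W t.1.2 t.2 = 0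
    · rw [h]; ring
    · obtain ⟨hP', hW'⟩ := mul_ne_zero_iff.mp h
      have hPYne : (∑ x', P (x', t.1.2)) ≠ 0 := (hPYpos t.1.1 t.1.2 hP').ne'
      have hMne : auxM p t.1.1 t.2 ≠ 0 := (hMpos t.1.1 t.2 t.1.2 hP' hW').ne'
      rw [Real.logb_mul hPYne (mul_ne_zero hW' hMne), Real.logb_mul hW' hMne]
      ring
  have hsplita : ∑ t : ((Fin m → Bool) × B) × (Fin m → Bool),
      P t.1 * W t.1.2 t.2 * Real.logb 2 (P t.1 * W t.1.2 t.2)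
      = (∑ t : ((Fin m → Bool) × B) × (Fin m → Bool),
          P t.1 * W t.1.2 t.2 * Real.logb 2 (P t.1))
        + ∑ t : ((Fin m → Bool) × B) × (Fin m → Bool),
          P t.1 * W t.1.2 t.2 * Real.logb 2 (W t.1.2 t.2) := by
    rw [← Finset.sum_add_distrib]
    apply Finset.sum_congr rfl
    intro t _
    by_cases h : P t.1 * W t.1.2 t.2 = 0
    · rw [h]; ring
    · obtain ⟨hP', hW'⟩ := mul_ne_zero_iff.mp h
      rw [Real.logb_mul hP' hW']
      ring
  rw [hsplitb, hsplita] at hGibbs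
  -- hGibbs : SPY + (SW + SM) ≤ SP + SW, hence SPY + SM ≤ SP
  -- entropy identities
  have hSP : shannonEnt P = -∑ t : ((Fin m → Bool) × B) × (Fin m → Bool),
      P t.1 * W t.1.2 t.2 * Real.logb 2 (P t.1) := by
    have h1 : ∑ t : ((Fin m → Bool) × B) × (Fin m → Bool),
        P t.1 * W t.1.2 t.2 * Real.logb 2 (P t.1)
        = ∑ u : (Fin m → Bool) × B, P u * Real.logb 2 (P u) := by
      rw [Fintype.sum_prod_type]
      apply Finset.sum_congr rfl
      intro u _
      dsimp only
      rw [← Finset.sum_mul, ← Finset.mul_sum, hW1, mul_one]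
    rw [h1]
    simp only [shannonEnt]
    rw [← Finset.sum_neg_distrib]
  have hSY : shannonEnt (fun y => ∑ x, P (x, y)) = -∑ t : ((Fin m → Bool) × B) × (Fin m → Bool),
      P t.1 * W t.1.2 t.2 * Real.logb 2 (∑ x', P (x', t.1.2)) := by
    have h1 : ∑ t : ((Fin m → Bool) × B) × (Fin m → Bool),
        P t.1 * W t.1.2 t.2 * Real.logb 2 (∑ x', P (x', t.1.2))
        = ∑ u : (Fin m → Bool) × B, P u * Real.logb 2 (∑ x', P (x', u.2)) := by
      rw [Fintype.sum_prod_type]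
      apply Finset.sum_congr rfl
      intro u _
      dsimp only
      rw [← Finset.sum_mul, ← Finset.mul_sum, hW1, mul_one]
    have h2 : ∑ u : (Fin m → Bool) × B, P u * Real.logb 2 (∑ x', P (x', u.2))
        = ∑ y : B, (∑ x, P (x, y)) * Real.logb 2 (∑ x', P (x', y)) := by
      rw [Fintype.sum_prod_type, Finset.sum_comm]
      apply Finset.sum_congr rfl
      intro y _
      dsimp only
      rw [← Finset.sum_mul]
    rw [h1, h2]
    simp only [shannonEnt]
    rw [← Finset.sum_neg_distrib]
  -- the binary-entropy bound for the Z part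
  have hSM : -∑ t : ((Fin m → Bool) × B) × (Fin m → Bool),
      P t.1 * W t.1.2 t.2 * Real.logb 2 (auxM p t.1.1 t.2) ≤ (m : ℝ) * binEnt p := by
    have h1 : ∑ t : ((Fin m → Bool) × B) × (Fin m → Bool),
        P t.1 * W t.1.2 t.2 * Real.logb 2 (auxM p t.1.1 t.2)
        = ∑ i : Fin m, ∑ t : ((Fin m → Bool) × B) × (Fin m → Bool),
          P t.1 * W t.1.2 t.2 * Real.logb 2 (auxMu p (t.1.1 i) (t.2 i)) := by
      have e1 : ∀ t : ((Fin m → Bool) × B) × (Fin m → Bool),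
          P t.1 * W t.1.2 t.2 * Real.logb 2 (auxM p t.1.1 t.2)
          = ∑ i : Fin m, P t.1 * W t.1.2 t.2 * Real.logb 2 (auxMu p (t.1.1 i) (t.2 i)) := by
        intro t
        by_cases h : P t.1 * W t.1.2 t.2 = 0
        · rw [h]; simp
        · obtain ⟨hP', hW'⟩ := mul_ne_zero_iff.mp h
          rw [← Finset.mul_sum]
          congr 1
          unfold auxM
          rw [Real.logb_prod]
          exact fun i _ => (hμpos t.1.1 t.2 t.1.2 hP' hW' i).ne'
      rw [Finset.sum_congr rfl fun t _ => e1 t, Finset.sum_comm]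
    rw [h1, ← Finset.sum_neg_distrib]
    have h2 : ∀ i : Fin m, -∑ t : ((Fin m → Bool) × B) × (Fin m → Bool),
        P t.1 * W t.1.2 t.2 * Real.logb 2 (auxMu p (t.1.1 i) (t.2 i)) ≤ binEnt p := by
      intro i
      have hsplit : ∑ t : ((Fin m → Bool) × B) × (Fin m → Bool),
          P t.1 * W t.1.2 t.2 * Real.logb 2 (auxMu p (t.1.1 i) (t.2 i))
          = (∑ t : ((Fin m → Bool) × B) × (Fin m → Bool),
              (if t.2 i = t.1.1 i then P t.1 * W t.1.2 t.2 else 0)) * Real.logb 2 p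
            + (1 - ∑ t : ((Fin m → Bool) × B) × (Fin m → Bool),
              (if t.2 i = t.1.1 i then P t.1 * W t.1.2 t.2 else 0)) * Real.logb 2 (1 - p) := by
        have e1 : ∀ t : ((Fin m → Bool) × B) × (Fin m → Bool),
            P t.1 * W t.1.2 t.2 * Real.logb 2 (auxMu p (t.1.1 i) (t.2 i))
            = (if t.2 i = t.1.1 i then P t.1 * W t.1.2 t.2 else 0) * Real.logb 2 p
              + (if t.2 i = t.1.1 i then 0 else P t.1 * W t.1.2 t.2) * Real.logb 2 (1 - p) := by
          intro t
          unfold auxMu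
          by_cases h : t.2 i = t.1.1 i
          · rw [if_pos h, if_pos h, if_pos h.symm]; ring
          · rw [if_neg (fun hh => h hh.symm), if_neg h, if_neg h]; ring
        have e2 : (∑ t : ((Fin m → Bool) × B) × (Fin m → Bool),
            (if t.2 i = t.1.1 i then 0 else P t.1 * W t.1.2 t.2))
            = 1 - ∑ t : ((Fin m → Bool) × B) × (Fin m → Bool),
              (if t.2 i = t.1.1 i then P t.1 * W t.1.2 t.2 else 0) := by
          have hadd : (∑ t : ((Fin m → Bool) × B) × (Fin m → Bool),
              (if t.2 i = t.1.1 i then P t.1 * W t.1.2 t.2 else 0))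
              + ∑ t : ((Fin m → Bool) × B) × (Fin m → Bool),
                (if t.2 i = t.1.1 i then 0 else P t.1 * W t.1.2 t.2) = 1 := by
            rw [← Finset.sum_add_distrib]
            exact (Finset.sum_congr rfl fun t _ => by split <;> ring).trans haF
          linarith
        rw [Finset.sum_congr rfl fun t _ => e1 t, Finset.sum_add_distrib,
          ← Finset.sum_mul, ← Finset.sum_mul, e2]
      rw [hsplit]
      exact aux_ent_bound hp (hple1 i) (hZF i)
    calc ∑ i : Fin m, -∑ t : ((Fin m → Bool) × B) × (Fin m → Bool),
        P t.1 * W t.1.2 t.2 * Real.logb 2 (auxMu p (t.1.1 i) (t.2 i))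
        ≤ ∑ _i : Fin m, binEnt p := Finset.sum_le_sum fun i _ => h2 i
      _ = (m : ℝ) * binEnt p := by
        rw [Finset.sum_const, Finset.card_univ, Fintype.card_fin, nsmul_eq_mul]
  -- entropy of the uniform marginal
  have hSX : shannonEnt (fun x : Fin m → Bool => ∑ y, P (x, y)) = m := by
    simp only [shannonEnt]
    simp_rw [hX]
    rw [Finset.sum_const, Finset.card_univ]
    have hcard : Fintype.card (Fin m → Bool) = 2 ^ m := by
      rw [Fintype.card_fun, Fintype.card_bool, Fintype.card_fin]
    have hlogb : Real.logb 2 ((1:ℝ) / 2 ^ m) = -(m:ℝ) := by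
      rw [one_div, Real.logb_inv, Real.logb_pow, Real.logb_self_eq_one one_lt_two]
      ring
    rw [hcard, hlogb, nsmul_eq_mul]
    have h2m : ((2:ℝ) ^ m) ≠ 0 := by positivity
    push_cast
    field_simp
  -- final assembly
  simp only [mutInfo]
  rw [hSX]
  have hfin : shannonEnt P - shannonEnt (fun y => ∑ x, P (x, y)) ≤ (m : ℝ) * binEnt p := by
    rw [hSP, hSY]
    linarith
  have hexp : (1 - binEnt p) * (m : ℝ) = (m : ℝ) - (m : ℝ) * binEnt p := by ring
  linarith
end

section
/- There is no classical (2,1,p) random access encoding for any p > 1/2. That is, there do not exist a probabilistic encoding f: {0,1}² × R → {0,1} and probabilistic decoders V₁, V₂: {0,1} × R' → {0,1} such that for every x ∈ {0,1}² and every i ∈ {1,2}, Prob[V_i(f(x,r),r') = x_i] > 1/2. -/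
/-!
The encoding of `x` is a mixture of the two encoded bits, so the point
`(Prob[V₀(f x) = 1], Prob[V₁(f x) = 1])` lies on the line through the points `P⁰`, `P¹` of the
two encoded bits. Decoding both bits of `x` with probability `> 1/2` puts this point in the open
quadrant around `(1/2, 1/2)` indexed by `x`, but no line meets all four open quadrants.
-/

open Finset Set AffineMap

section Quadrants

variable {𝕜 : Type*} [Field 𝕜] [LinearOrder 𝕜] [IsStrictOrderedRing 𝕜]

def openHalfLine (c : 𝕜) : Bool → Set 𝕜
  | true => Ioi c
  | false => Iio c

def openQuadrant (c : 𝕜 × 𝕜) (s : Bool × Bool) : Set (𝕜 × 𝕜) :=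
  openHalfLine c.1 s.1 ×ˢ openHalfLine c.2 s.2

lemma sub_mul_sub_pos_of_lineMap_lt_of_lt_lineMap {p₀ p₁ c s t : 𝕜}
    (hs : lineMap p₀ p₁ s < c) (ht : c < lineMap p₀ p₁ t) : 0 < (t - s) * (p₁ - p₀) := by
  rw [lineMap_apply_ring'] at hs ht
  linarith

theorem exists_openQuadrant_forall_lineMap_notMem (P₀ P₁ c : 𝕜 × 𝕜) :
    ∃ s, ∀ t : 𝕜, lineMap P₀ P₁ t ∉ openQuadrant c s := by
  by_contra! h
  choose t ht using h
  simp only [openQuadrant, mem_prod, openHalfLine, fst_lineMap, snd_lineMap] at ht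
  obtain ⟨hpp₁, hpp₂⟩ := ht (true, true)
  obtain ⟨hnn₁, hnn₂⟩ := ht (false, false)
  obtain ⟨hpn₁, hpn₂⟩ := ht (true, false)
  obtain ⟨hnp₁, hnp₂⟩ := ht (false, true)
  -- The quadrants `(+,+)`, `(-,-)` force the two coordinates of `P₁ - P₀` to have the same
  -- sign, the quadrants `(+,-)`, `(-,+)` opposite signs.
  have h₁ := sub_mul_sub_pos_of_lineMap_lt_of_lt_lineMap hnn₁ hpp₁
  have h₂ := sub_mul_sub_pos_of_lineMap_lt_of_lt_lineMap hnn₂ hpp₂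
  have h₃ := sub_mul_sub_pos_of_lineMap_lt_of_lt_lineMap hnp₁ hpn₁
  have h₄ := sub_mul_sub_pos_of_lineMap_lt_of_lt_lineMap hpn₂ hnp₂
  nlinarith [mul_pos h₁ h₂, mul_pos h₃ h₄]

lemma half_lt_ite_iff_mem_openHalfLine (b : Bool) (p : 𝕜) :
    (1 / 2 < if b then p else 1 - p) ↔ p ∈ openHalfLine (1 / 2) b := by
  cases b
  · simp only [openHalfLine, Set.mem_Iio, Bool.false_eq_true, if_false]
    constructor <;> intro <;> linarith
  · simp [openHalfLine]

end Quadrants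

section Mixtures

variable {𝕜 R R' : Type*} [Ring 𝕜] [Fintype R] [Fintype R'] {μ : R → 𝕜} {μ' : R' → 𝕜}

def probTrue (μ : R → 𝕜) (g : R → Bool) : 𝕜 := ∑ r, if g r then μ r else 0

lemma sum_ite_eq_eq_ite_probTrue (hμ : ∑ r, μ r = 1) (g : R → Bool) (b : Bool) :
    ∑ r, (if g r = b then μ r else 0) = if b then probTrue μ g else 1 - probTrue μ g := by
  cases b
  · rw [if_neg Bool.false_ne_true, probTrue, ← hμ, ← sum_sub_distrib]
    refine sum_congr rfl fun r _ => ?_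
    cases g r <;> simp
  · simp [probTrue]

lemma sum_smul_comp_eq_lineMap {E : Type*} [AddCommGroup E] [Module 𝕜 E]
    (hμ : ∑ r, μ r = 1) (g : R → Bool) (φ : Bool → E) :
    ∑ r, μ r • φ (g r) = lineMap (φ false) (φ true) (probTrue μ g) := by
  have hsplit : ∀ r, μ r • φ (g r) =
      (if g r = false then μ r else 0) • φ false + (if g r = true then μ r else 0) • φ true := by
    intro r
    cases g r <;> simp
  simp only [hsplit, sum_add_distrib, ← sum_smul, sum_ite_eq_eq_ite_probTrue hμ,
    lineMap_apply_module]
  simp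

lemma sum_sum_ite_eq_eq_ite (hμ : ∑ r, μ r = 1) (hμ' : ∑ r', μ' r' = 1)
    (g : R → R' → Bool) (b : Bool) :
    ∑ r, ∑ r', (if g r r' = b then μ r * μ' r' else 0) =
      if b then ∑ r, μ r * probTrue μ' (g r) else 1 - ∑ r, μ r * probTrue μ' (g r) := by
  simp only [← mul_ite_zero, ← mul_sum, sum_ite_eq_eq_ite_probTrue hμ']
  cases b <;> simp [mul_sub, sum_sub_distrib, hμ]

end Mixtures

theorem no_two_into_one_classical_encoding_general
    (R R' : Type) [Fintype R] [Fintype R']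
    (μ : R → ℝ) (μ' : R' → ℝ)
    (hμ1 : ∑ r, μ r = 1)
    (hμ'1 : ∑ r', μ' r' = 1)
    (f : Bool × Bool → R → Bool)
    (V : Fin 2 → Bool → R' → Bool) :
    ¬ (∀ (x : Bool × Bool) (i : Fin 2),
        1 / 2 < ∑ r : R, ∑ r' : R',
          (if V i (f x r) r' = (if i = 0 then x.1 else x.2)
            then μ r * μ' r' else 0)) := by
  intro h
  let P : Bool → ℝ × ℝ := fun b => (probTrue μ' (V 0 b), probTrue μ' (V 1 b))
  obtain ⟨s, hs⟩ := exists_openQuadrant_forall_lineMap_notMem (P false) (P true) (1 / 2, 1 / 2)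
  refine hs (probTrue μ (f s)) ?_
  have h₀ := h s 0
  have h₁ := h s 1
  simp only [sum_sum_ite_eq_eq_ite hμ1 hμ'1, half_lt_ite_iff_mem_openHalfLine] at h₀ h₁
  rw [← sum_smul_comp_eq_lineMap hμ1]
  exact ⟨by simpa [Prod.fst_sum, P] using h₀, by simpa [Prod.snd_sum, P] using h₁⟩

/-- No classical (2,1,p) random access encoding exists for any p > 1/2:
for any probabilistic encoder f of a 2-bit string into 1 bit and any
probabilistic decoders V₁, V₂, it cannot be that every bit of every string
is decoded correctly with probability exceeding 1/2. -/
theorem no_two_into_one_classical_encoding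
    (R R' : Type) [Fintype R] [Fintype R']
    (μ : R → ℝ) (μ' : R' → ℝ)
    (hμ0 : ∀ r, 0 ≤ μ r) (hμ1 : ∑ r, μ r = 1)
    (hμ'0 : ∀ r', 0 ≤ μ' r') (hμ'1 : ∑ r', μ' r' = 1)
    (f : Bool × Bool → R → Bool)
    (V : Fin 2 → Bool → R' → Bool) :
    ¬ (∀ (x : Bool × Bool) (i : Fin 2),
        1 / 2 < ∑ r : R, ∑ r' : R',
          (if V i (f x r) r' = (if i = 0 then x.1 else x.2)
            then μ r * μ' r' else 0)) :=
  no_two_into_one_classical_encoding_general R R' μ μ' hμ1 hμ'1 f V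
end

section
/- Suppose x₁ and x₂ are uniformly random bits and y ∈ {0,1} is any (possibly randomized) function of (x₁,x₂), and suppose z₁, z₂ are (possibly randomized) functions of y. Then min over i ∈ {1,2} and x ∈ {0,1}² of Prob[z_i = x_i | (x₁,x₂) = x] ≤ 1/2. -/
/-!
Write `q x` for the probability that the encoder sends `y = true` on input `x`. Once the
decoder of bit `i` is fixed, its success probability on `x` is affine in `q x`, increasing
when the correct answer is `true` and decreasing when it is `false`. Succeeding with
probability `> 1/2` everywhere therefore needs a slope `d` with `d * (q x - q x') > 0`
whenever `x` and `x'` have `i`-th bits `true` and `false`. Doing this for both bits and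
comparing `(1,1)` with `(0,0)` and `(1,0)` with `(0,1)` gives slopes `d`, `e` of both equal
and opposite signs.
-/

open Finset

section StochasticMaps

variable {α β γ : Type*} [Fintype β] [Fintype γ]

theorem sum_sum_mul_eq_one {e : β → ℝ} {D : β → γ → ℝ} (he : ∑ y, e y = 1)
    (hD : ∀ y, ∑ z, D y z = 1) :
    ∑ z, ∑ y, e y * D y z = 1 := by
  rw [Finset.sum_comm]
  simp only [← Finset.mul_sum, hD, mul_one, he]

theorem sum_bool_mul_eq_add_mul_sub {e g : Bool → ℝ} (he : ∑ y, e y = 1) :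
    ∑ y, e y * g y = g false + e true * (g true - g false) := by
  rw [Fintype.sum_bool] at he ⊢
  linear_combination g false * he

theorem exists_separating_slope (enc : α → Bool → ℝ) (D : Bool → Bool → ℝ) (b : α → Bool)
    (henc : ∀ x, ∑ y, enc x y = 1) (hD : ∀ y, ∑ z, D y z = 1)
    (hb : ∀ x, 1 / 2 < ∑ y, enc x y * D y (b x)) :
    ∃ d : ℝ, ∀ x x', b x = true → b x' = false → 0 < d * (enc x true - enc x' true) := by
  refine ⟨D true true - D false true, fun x x' hx hx' => ?_⟩
  have hsuccess := hb x
  have hsuccess' := hb x'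
  rw [hx, sum_bool_mul_eq_add_mul_sub (henc x)] at hsuccess
  rw [hx'] at hsuccess'
  have htotal := sum_sum_mul_eq_one (henc x') hD
  rw [Fintype.sum_bool, sum_bool_mul_eq_add_mul_sub (henc x')] at htotal
  linarith

end StochasticMaps

theorem not_separates_both_coordinates (q : Bool × Bool → ℝ) (d e : ℝ)
    (hd : ∀ x x' : Bool × Bool, x.1 = true → x'.1 = false → 0 < d * (q x - q x'))
    (he : ∀ x x' : Bool × Bool, x.2 = true → x'.2 = false → 0 < e * (q x - q x')) :
    False := by
  have h₁ := hd (true, true) (false, false) rfl rfl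
  have h₂ := he (true, true) (false, false) rfl rfl
  have h₃ := hd (true, false) (false, true) rfl rfl
  have h₄ := he (false, true) (true, false) rfl rfl
  -- the two positive products cancel
  linarith [mul_pos h₁ h₄, mul_pos h₂ h₃]

theorem two_into_one_decoding_fails_general
    (enc : Bool × Bool → Bool → ℝ)
    (dec : Fin 2 → Bool → Bool → ℝ)
    (henc1 : ∀ x, ∑ y, enc x y = 1)
    (hdec1 : ∀ i y, ∑ z, dec i y z = 1) :
    ∃ (i : Fin 2) (x : Bool × Bool),
      ∑ y : Bool, enc x y * dec i y (if i = 0 then x.1 else x.2) ≤ 1 / 2 := by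
  by_contra! h
  obtain ⟨d, hd⟩ :=
    exists_separating_slope enc (dec 0) Prod.fst henc1 (hdec1 0) (by simpa using h 0)
  obtain ⟨e, he⟩ :=
    exists_separating_slope enc (dec 1) Prod.snd henc1 (hdec1 1) (by simpa using h 1)
  exact not_separates_both_coordinates (enc · true) d e hd he

/-- Probabilistic impossibility of 2-into-1 classical random access codes:
if y ∈ {0,1} is a randomized function of (x₁,x₂) (channel `enc`) and z₁, z₂
are randomized functions of y (channels `dec i`), then some bit of some input
is decoded correctly with probability at most 1/2. -/
theorem two_into_one_decoding_fails
    (enc : Bool × Bool → Bool → ℝ)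
    (dec : Fin 2 → Bool → Bool → ℝ)
    (henc0 : ∀ x y, 0 ≤ enc x y) (henc1 : ∀ x, ∑ y, enc x y = 1)
    (hdec0 : ∀ i y z, 0 ≤ dec i y z) (hdec1 : ∀ i y, ∑ z, dec i y z = 1) :
    ∃ (i : Fin 2) (x : Bool × Bool),
      ∑ y : Bool, enc x y * dec i y (if i = 0 then x.1 else x.2) ≤ 1 / 2 :=
  two_into_one_decoding_fails_general enc dec henc1 hdec1
end

section
/- If there exists a (pure-state) quantum random access encoding of m bits into n qubits such that each bit can be decoded with probability at least 1 - ε, where ε ≤ 1/(64 m²), then by deferring measurements and composing the m decoding unitaries, all m bits can be simultaneously recovered with probability at least 1 - 4m√ε ≥ 1/2; consequently, by Holevo's theorem, n ≥ Ω(m). -/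
/-!
Each decoding measurement `M i` is replaced by the two-outcome instrument with Kraus operators
`√A`, `√(1 - A)`, where `A = ℜ (M i)`, and the `m` instruments are performed one after the other
(the deferred-measurement circuit). If bit `i` of `x` is decoded with error at most `ε`, the
Kraus operator of the correct outcome moves `φ x` by at most `√ε`; by the hybrid argument the
composed Kraus operator of outcome `x` moves it by at most `m√ε ≤ 1/8`, so `x` is recovered with
probability at least `1 - 2m√ε`. Holevo's bound enters in its counting form: for a POVM `N` on a
`d`-dimensional space and unit vectors `φ x`, `∑ₓ ⟪φ x, N x (φ x)⟫ ≤ tr 1 = d`, so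
`2^m · 3/4 ≤ 2^n` and hence `m ≤ n`.
-/

open scoped InnerProductSpace ComplexStarModule
open RCLike ContinuousLinearMap

section Hybrid

variable {𝕜 E : Type*} [NontriviallyNormedField 𝕜] [SeminormedAddCommGroup E] [NormedSpace 𝕜 E]

theorem norm_list_prod_apply_sub_self_le (l : List (E →L[𝕜] E)) (hl : ∀ T ∈ l, ‖T‖ ≤ 1)
    (φ : E) : ‖l.prod φ - φ‖ ≤ (l.map fun T => ‖T φ - φ‖).sum := by
  induction l with
  | nil => simp
  | cons T l ih =>
    have hsplit : (T :: l).prod φ - φ = T (l.prod φ - φ) + (T φ - φ) := by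
      simp only [List.prod_cons, mul_apply_eq_comp, map_sub]
      abel
    calc ‖(T :: l).prod φ - φ‖ ≤ ‖T (l.prod φ - φ)‖ + ‖T φ - φ‖ := hsplit ▸ norm_add_le _ _
      _ ≤ ‖l.prod φ - φ‖ + ‖T φ - φ‖ := by
        gcongr
        simpa using T.le_of_opNorm_le (hl T List.mem_cons_self) (l.prod φ - φ)
      _ ≤ _ := by
        rw [List.map_cons, List.sum_cons, add_comm]
        gcongr
        exact ih fun S hS => hl S (List.mem_cons_of_mem T hS)

end Hybrid

section Composition

variable {R β : Type*} {k : ℕ}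

/-- Kraus operator of the outcome `y` when the measurements with Kraus operators `K i` are
performed in sequence, `K 0` last. -/
def composedKraus [Monoid R] (K : Fin k → β → R) (y : Fin k → β) : R :=
  (List.ofFn fun i => K i (y i)).prod

theorem composedKraus_cons [Monoid R] (K : Fin (k + 1) → β → R) (b : β) (t : Fin k → β) :
    composedKraus K (Fin.cons b t) = K 0 b * composedKraus (fun i => K i.succ) t := by
  simp [composedKraus, List.ofFn_succ]

theorem sum_star_composedKraus_mul_self [Semiring R] [StarRing R] [Fintype β]
    (K : Fin k → β → R) (hK : ∀ i, ∑ b, star (K i b) * K i b = 1) :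
    ∑ y, star (composedKraus K y) * composedKraus K y = 1 := by
  induction k with
  | zero => simp [composedKraus]
  | succ k ih =>
    rw [← (Fin.consEquiv fun _ => β).sum_comp, Fintype.sum_prod_type_right]
    simp only [Fin.consEquiv, Equiv.coe_fn_mk, composedKraus_cons, star_mul]
    calc _ = ∑ t, star (composedKraus (fun i => K i.succ) t) *
            (∑ b, star (K 0 b) * K 0 b) * composedKraus (fun i => K i.succ) t := by
          simp only [Finset.mul_sum, Finset.sum_mul, mul_assoc]
      _ = 1 := by simpa [hK 0] using ih _ fun i => hK i.succ

theorem norm_composedKraus_apply_sub_self_le [NontriviallyNormedField R] {E : Type*}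
    [SeminormedAddCommGroup E] [NormedSpace R E] (K : Fin k → β → E →L[R] E)
    (hK : ∀ i b, ‖K i b‖ ≤ 1) (y : Fin k → β) (φ : E) :
    ‖composedKraus K y φ - φ‖ ≤ ∑ i, ‖K i (y i) φ - φ‖ := by
  refine (norm_list_prod_apply_sub_self_le _ (fun T hT => ?_) φ).trans_eq ?_
  · obtain ⟨i, rfl⟩ := List.mem_ofFn.1 hT
    exact hK i (y i)
  · rw [List.map_ofFn, List.sum_ofFn]
    rfl

end Composition

theorem one_sub_two_mul_le_norm_sq {E : Type*} [SeminormedAddCommGroup E] {v φ : E} {δ : ℝ}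
    (hφ : ‖φ‖ = 1) (h : ‖v - φ‖ ≤ δ) : 1 - 2 * δ ≤ ‖v‖ ^ 2 := by
  have : 1 - δ ≤ ‖v‖ := by
    linarith [norm_sub_norm_le φ v, norm_sub_rev v φ]
  rcases le_or_gt δ 1 with hδ | hδ
  · nlinarith [pow_le_pow_left₀ (by linarith) this 2, sq_nonneg δ]
  · nlinarith [norm_nonneg v]

theorem mul_sqrt_le_of_le_one_div_sq {m ε : ℝ} (hm : 0 ≤ m) (hε : ε ≤ 1 / (64 * m ^ 2)) :
    m * √ε ≤ 1 / 8 := by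
  rcases hm.eq_or_lt with rfl | hm
  · norm_num
  calc m * √ε ≤ m * √((1 / (8 * m)) ^ 2) := by
        gcongr
        exact hε.trans_eq (by ring)
    _ = 1 / 8 := by
        rw [Real.sqrt_sq (by positivity)]
        field_simp

theorem le_of_two_pow_mul_le_two_pow {m n : ℕ} {c : ℝ} (hc : 1 / 2 < c)
    (h : 2 ^ m * c ≤ 2 ^ n) : m ≤ n := by
  by_contra! hnm
  have : (2 : ℝ) ^ (n + 1) ≤ 2 ^ m := pow_le_pow_right₀ one_le_two hnm
  rw [pow_succ] at this
  nlinarith [pow_pos (two_pos (α := ℝ)) n]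

section LoewnerOrder

variable {𝕜 E : Type*} [RCLike 𝕜] [NormedAddCommGroup E] [InnerProductSpace 𝕜 E]

theorem re_inner_le_of_le {X Y : E →L[𝕜] E} (h : X ≤ Y) (ψ : E) :
    re ⟪ψ, X ψ⟫_𝕜 ≤ re ⟪ψ, Y ψ⟫_𝕜 := by
  have := ((le_def X Y).1 h).re_inner_nonneg_right ψ
  rwa [sub_apply, inner_sub_right, map_sub, sub_nonneg] at this

variable [CompleteSpace E]

theorem le_of_forall_re_inner_le {X Y : E →L[𝕜] E} (hX : IsSelfAdjoint X) (hY : IsSelfAdjoint Y)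
    (h : ∀ ψ, re ⟪ψ, X ψ⟫_𝕜 ≤ re ⟪ψ, Y ψ⟫_𝕜) : X ≤ Y := by
  refine (le_def X Y).2 (isPositive_def'.2 ⟨hY.sub hX, fun ψ => ?_⟩)
  rw [reApplyInnerSelf_apply, sub_apply, inner_sub_left, map_sub, inner_re_symm (X ψ),
    inner_re_symm (Y ψ), sub_nonneg]
  exact h ψ

theorem re_inner_star_mul_self_apply (B : E →L[𝕜] E) (ψ : E) :
    re ⟪ψ, (star B * B) ψ⟫_𝕜 = ‖B ψ‖ ^ 2 :=
  (apply_norm_sq_eq_inner_adjoint_right B ψ).symm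

end LoewnerOrder

section Effect

variable {E : Type*} [NormedAddCommGroup E] [InnerProductSpace ℂ E] [CompleteSpace E]

theorem re_inner_realPart_apply (M : E →L[ℂ] E) (ψ : E) :
    re ⟪ψ, (ℜ M : E →L[ℂ] E) ψ⟫_ℂ = re ⟪ψ, M ψ⟫_ℂ := by
  have : re ⟪ψ, star M ψ⟫_ℂ = re ⟪ψ, M ψ⟫_ℂ := by
    rw [star_eq_adjoint, adjoint_inner_right, inner_re_symm]
  rw [realPart_apply_coe, smul_apply, add_apply, inner_smul_right_eq_smul, inner_add_right,
    smul_re, map_add, this]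
  ring

theorem realPart_mem_Icc {M : E →L[ℂ] E}
    (hM : ∀ ψ, 0 ≤ re ⟪ψ, M ψ⟫_ℂ ∧ re ⟪ψ, M ψ⟫_ℂ ≤ ‖ψ‖ ^ 2) :
    (ℜ M : E →L[ℂ] E) ∈ Set.Icc 0 1 := by
  have hsa : IsSelfAdjoint (ℜ M : E →L[ℂ] E) := (ℜ M).2
  constructor
  · refine le_of_forall_re_inner_le (.zero _) hsa fun ψ => ?_
    rw [re_inner_realPart_apply, zero_apply, inner_zero_right, map_zero]
    exact (hM ψ).1
  · refine le_of_forall_re_inner_le hsa (.one _) fun ψ => ?_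
    rw [re_inner_realPart_apply, one_apply_eq_self, inner_self_eq_norm_sq]
    exact (hM ψ).2

theorem norm_sqrt_apply_sub_self_sq_le {A : E →L[ℂ] E} (hA : A ∈ Set.Icc 0 1) (φ : E) :
    ‖CFC.sqrt A φ - φ‖ ^ 2 ≤ ‖φ‖ ^ 2 - re ⟪φ, A φ⟫_ℂ := by
  set S := CFC.sqrt A
  have hS0 : 0 ≤ S := CFC.sqrt_nonneg A
  have hS1 : S ≤ 1 := by simpa using CFC.sqrt_le_sqrt A 1 hA.2
  have hAS : A ≤ S := by
    simpa [S, CFC.sq_sqrt A hA.1] using CStarAlgebra.pow_antitone hS0 hS1 one_le_two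
  have hSS : ‖S φ‖ ^ 2 = re ⟪φ, A φ⟫_ℂ := by
    rw [← re_inner_star_mul_self_apply, (IsSelfAdjoint.of_nonneg hS0).star_eq,
      CFC.sqrt_mul_sqrt_self A hA.1]
  rw [@norm_sub_sq ℂ, hSS, inner_re_symm (S φ)]
  linarith [re_inner_le_of_le hAS φ]

noncomputable def effectKraus (A : E →L[ℂ] E) (b : Bool) : E →L[ℂ] E :=
  if b then CFC.sqrt A else CFC.sqrt (1 - A)

variable {A : E →L[ℂ] E}

theorem sum_star_effectKraus_mul_self (hA : A ∈ Set.Icc 0 1) :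
    ∑ b, star (effectKraus A b) * effectKraus A b = 1 := by
  have hA' : 1 - A ∈ Set.Icc 0 1 := Set.sub_mem_Icc_zero_iff_right.2 hA
  have h (B : E →L[ℂ] E) (hB : 0 ≤ B) : star (CFC.sqrt B) * CFC.sqrt B = B := by
    rw [(IsSelfAdjoint.of_nonneg (CFC.sqrt_nonneg B)).star_eq, CFC.sqrt_mul_sqrt_self B hB]
  simp [effectKraus, h A hA.1, h (1 - A) hA'.1]

theorem norm_effectKraus_le_one (hA : A ∈ Set.Icc 0 1) (b : Bool) : ‖effectKraus A b‖ ≤ 1 := by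
  have hA' : 1 - A ∈ Set.Icc 0 1 := Set.sub_mem_Icc_zero_iff_right.2 hA
  have h (B : E →L[ℂ] E) (hB : B ≤ 1) : ‖CFC.sqrt B‖ ≤ 1 :=
    (CStarAlgebra.norm_le_one_iff_of_nonneg _ (CFC.sqrt_nonneg B)).2
      (by simpa using CFC.sqrt_le_sqrt B 1 hB)
  cases b
  · exact h _ hA'.2
  · exact h _ hA.2

theorem norm_effectKraus_apply_sub_self_sq_le (hA : A ∈ Set.Icc 0 1) (b : Bool) (φ : E) :
    ‖effectKraus A b φ - φ‖ ^ 2 ≤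
      ‖φ‖ ^ 2 - if b then re ⟪φ, A φ⟫_ℂ else ‖φ‖ ^ 2 - re ⟪φ, A φ⟫_ℂ := by
  have hA' : 1 - A ∈ Set.Icc 0 1 := Set.sub_mem_Icc_zero_iff_right.2 hA
  cases b
  · have h := norm_sqrt_apply_sub_self_sq_le hA' φ
    rwa [sub_apply, one_apply_eq_self, inner_sub_right, map_sub, inner_self_eq_norm_sq] at h
  · exact norm_sqrt_apply_sub_self_sq_le hA φ

theorem one_sub_le_norm_composedKraus_effectKraus_apply_sq {m : ℕ} {ε : ℝ}
    {A : Fin m → E →L[ℂ] E} (hA : ∀ i, A i ∈ Set.Icc 0 1) {φ : (Fin m → Bool) → E}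
    (hφ : ∀ x, ‖φ x‖ = 1)
    (hbit : ∀ x i, 1 - ε ≤ if x i then re ⟪φ x, A i (φ x)⟫_ℂ else 1 - re ⟪φ x, A i (φ x)⟫_ℂ)
    (x : Fin m → Bool) :
    1 - 2 * (m * √ε) ≤ ‖composedKraus (fun i => effectKraus (A i)) x (φ x)‖ ^ 2 := by
  have hstep (i : Fin m) : ‖effectKraus (A i) (x i) (φ x) - φ x‖ ≤ √ε := by
    refine Real.le_sqrt_of_sq_le ?_
    have := norm_effectKraus_apply_sub_self_sq_le (hA i) (x i) (φ x)
    rw [hφ x, one_pow] at this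
    linarith [hbit x i]
  refine one_sub_two_mul_le_norm_sq (hφ x) ?_
  calc _ ≤ ∑ i, ‖effectKraus (A i) (x i) (φ x) - φ x‖ :=
        norm_composedKraus_apply_sub_self_le _ (fun i => norm_effectKraus_le_one (hA i)) x (φ x)
    _ ≤ ∑ _i : Fin m, √ε := Finset.sum_le_sum fun i _ => hstep i
    _ = m * √ε := by simp

end Effect

section Trace

variable {𝕜 E : Type*} [RCLike 𝕜] [NormedAddCommGroup E] [InnerProductSpace 𝕜 E]
  [FiniteDimensional 𝕜 E] [CompleteSpace E]

theorem norm_apply_sq_le_re_trace (B : E →L[𝕜] E) {φ : E} (hφ : ‖φ‖ ≤ 1) :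
    ‖B φ‖ ^ 2 ≤ re (LinearMap.trace 𝕜 E ↑(star B * B)) := by
  let b := stdOrthonormalBasis 𝕜 E
  have htrace : re (LinearMap.trace 𝕜 E ↑(star B * B)) = ∑ k, ‖adjoint B (b k)‖ ^ 2 := by
    rw [toLinearMap_mul, LinearMap.trace_mul_comm, ← toLinearMap_mul,
      LinearMap.trace_eq_sum_inner _ b, map_sum]
    congr 1 with k
    rw [coe_coe, mul_apply_eq_comp, star_eq_adjoint, ← adjoint_inner_left, inner_self_eq_norm_sq]
  calc ‖B φ‖ ^ 2 = ∑ k, ‖⟪adjoint B (b k), φ⟫_𝕜‖ ^ 2 := by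
        simp_rw [adjoint_inner_left, b.sum_sq_norm_inner_right]
    _ ≤ ∑ k, ‖adjoint B (b k)‖ ^ 2 := by
        gcongr with k
        exact (norm_inner_le_norm _ _).trans (mul_le_of_le_one_right (norm_nonneg _) hφ)
    _ = _ := htrace.symm

theorem sum_norm_apply_sq_le_finrank {ι : Type*} [Fintype ι] (B : ι → E →L[𝕜] E)
    (hB : ∑ y, star (B y) * B y = 1) (φ : ι → E) (hφ : ∀ y, ‖φ y‖ ≤ 1) :
    ∑ y, ‖B y (φ y)‖ ^ 2 ≤ Module.finrank 𝕜 E := by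
  calc ∑ y, ‖B y (φ y)‖ ^ 2 ≤ ∑ y, re (LinearMap.trace 𝕜 E ↑(star (B y) * B y)) := by
        gcongr with y
        exact norm_apply_sq_le_re_trace (B y) (hφ y)
    _ = Module.finrank 𝕜 E := by
        rw [← map_sum, ← map_sum, ← toLinearMap_sum, hB, toLinearMap_one, LinearMap.trace_one,
          natCast_re]

end Trace

/-- If m bits have a pure-state quantum random access encoding into n qubits
with per-bit decoding error ε ≤ 1/(64m²), then all m bits can be
simultaneously recovered by a single measurement with probability at least
1 - 4m√ε ≥ 1/2, and consequently (Holevo) n ≥ Ω(m). -/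
theorem simultaneous_recovery_and_holevo_bound :
    ∃ c : ℝ, 0 < c ∧
      ∀ (m n : ℕ) (ε : ℝ), 0 ≤ ε → ε ≤ 1 / (64 * (m : ℝ) ^ 2) →
      ∀ (φ : (Fin m → Bool) → EuclideanSpace ℂ (Fin (2 ^ n))),
        (∀ x, ‖φ x‖ = 1) →
      ∀ (M : Fin m →
          (EuclideanSpace ℂ (Fin (2 ^ n)) →L[ℂ] EuclideanSpace ℂ (Fin (2 ^ n)))),
        (∀ i ψ, 0 ≤ (inner ℂ ψ ((M i) ψ) : ℂ).re ∧
                (inner ℂ ψ ((M i) ψ) : ℂ).re ≤ ‖ψ‖ ^ 2) →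
        (∀ x i, 1 - ε ≤
          (if x i then (inner ℂ (φ x) ((M i) (φ x)) : ℂ).re
           else 1 - (inner ℂ (φ x) ((M i) (φ x)) : ℂ).re)) →
        (∃ N : (Fin m → Bool) →
            (EuclideanSpace ℂ (Fin (2 ^ n)) →L[ℂ] EuclideanSpace ℂ (Fin (2 ^ n))),
          (∀ y ψ, 0 ≤ (inner ℂ ψ ((N y) ψ) : ℂ).re) ∧
          (∑ y, N y = ContinuousLinearMap.id ℂ (EuclideanSpace ℂ (Fin (2 ^ n)))) ∧
          (∀ x, 1 - 4 * m * Real.sqrt ε ≤ (inner ℂ (φ x) ((N x) (φ x)) : ℂ).re)) ∧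
        (1 / 2 : ℝ) ≤ 1 - 4 * m * Real.sqrt ε ∧
        c * m ≤ (n : ℝ) := by
  refine ⟨1, one_pos, fun m n ε _ hε φ hφ M hM hbit => ?_⟩
  have hδ : (m : ℝ) * √ε ≤ 1 / 8 := mul_sqrt_le_of_le_one_div_sq m.cast_nonneg hε
  have hδ0 : 0 ≤ (m : ℝ) * √ε := by positivity
  have hA i := realPart_mem_Icc (hM i)
  set B := composedKraus fun i => effectKraus (ℜ (M i)).val
  have hB : ∑ y, star (B y) * B y = 1 :=
    sum_star_composedKraus_mul_self _ fun i => sum_star_effectKraus_mul_self (hA i)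
  have hrecover (x) : 1 - 2 * (m * √ε) ≤ ‖B x (φ x)‖ ^ 2 :=
    one_sub_le_norm_composedKraus_effectKraus_apply_sq hA hφ
      (by simpa only [← re_to_complex, re_inner_realPart_apply] using hbit) x
  refine ⟨⟨fun y => star (B y) * B y, fun y ψ => ?_, by rw [hB, one_def], fun x => ?_⟩,
    by linarith, ?_⟩
  · rw [← re_to_complex, re_inner_star_mul_self_apply]
    positivity
  · rw [← re_to_complex, re_inner_star_mul_self_apply]
    linarith [hrecover x]
  · have hcount := sum_norm_apply_sq_le_finrank B hB φ fun x => (hφ x).le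
    rw [finrank_euclideanSpace_fin] at hcount
    have : (2 : ℝ) ^ m * (3 / 4) ≤ 2 ^ n := by
      calc (2 : ℝ) ^ m * (3 / 4) = ∑ _x : Fin m → Bool, 3 / 4 := by simp
        _ ≤ ∑ x, ‖B x (φ x)‖ ^ 2 := Finset.sum_le_sum fun x _ => by linarith [hrecover x]
        _ ≤ 2 ^ n := by exact_mod_cast hcount
    simpa using (Nat.cast_le (α := ℝ)).2 (le_of_two_pow_mul_le_two_pow (by norm_num) this)
end

section
/- For every m and every p with 1/2 < p ≤ 1 - 1/m, there exists a subset S ⊆ {0,1}^m (a covering code) of size at most 2^{(1-H(p))m + 4 log₂ m} such that every x ∈ {0,1}^m is within Hamming distance (1 - p - 1/m)·m of some codeword in S, where H is the binary entropy function. -/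
set_option maxHeartbeats 1000000

open Finset Real

lemma ball_card_ge (m r : ℕ) (y : Fin m → Bool) :
    (m.choose r : ℕ) ≤ (Finset.univ.filter (fun x : Fin m → Bool => hammingDist x y ≤ r)).card := by
  classical
  have h := Finset.card_le_card_of_injOn
    (f := fun s : Finset (Fin m) => (fun j => if j ∈ s then !(y j) else y j))
    (s := Finset.powersetCard r (univ : Finset (Fin m)))
    (t := Finset.univ.filter (fun x : Fin m → Bool => hammingDist x y ≤ r))
    ?_ ?_
  · simpa [Finset.card_powersetCard] using h
  · intro s hs
    simp only [Finset.mem_coe, Finset.mem_powersetCard] at hs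
    have hd : hammingDist (fun j => if j ∈ s then !(y j) else y j) y = s.card := by
      unfold hammingDist
      congr 1
      ext j
      by_cases hj : j ∈ s <;> simp [hj]
    exact Finset.mem_filter.2 ⟨Finset.mem_univ _, by rw [hd]; exact le_of_eq hs.2⟩
  · intro s hs t ht hst
    ext j
    have := congrFun hst j
    by_cases hjs : j ∈ s <;> by_cases hjt : j ∈ t <;> simp_all


private noncomputable def uTerm (m r i : ℕ) : ℝ :=
  (m.choose i : ℝ) * ((r : ℝ)/m)^i * (1 - (r : ℝ)/m)^(m - i)

lemma choose_ratio_up {m r i : ℕ} (hi : i + 1 ≤ r) (hrm : r < m) :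
    m.choose i * (m - r) ≤ m.choose (i + 1) * r := by
  have key : m.choose (i+1) * (i+1) = m.choose i * (m - i) := Nat.choose_succ_right_eq m i
  have h2 : (m - r) * (i+1) ≤ (m - i) * r := by
    have h3 : m - r ≤ m - i := by omega
    calc (m - r) * (i+1) ≤ (m - i) * (i + 1) := Nat.mul_le_mul_right _ h3
      _ ≤ (m - i) * r := Nat.mul_le_mul_left _ hi
  have : (m.choose i * (m - r)) * (i+1) ≤ (m.choose (i+1) * r) * (i+1) := by
    calc (m.choose i * (m - r)) * (i+1) = m.choose i * ((m - r) * (i+1)) := by ring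
      _ ≤ m.choose i * ((m - i) * r) := Nat.mul_le_mul_left _ h2
      _ = (m.choose (i+1) * (i+1)) * r := by rw [key]; ring
      _ = (m.choose (i+1) * r) * (i+1) := by ring
  exact Nat.le_of_mul_le_mul_right this (Nat.succ_pos i)

lemma choose_ratio_down {m r i : ℕ} (hi : r ≤ i) (him : i < m) (hrm : r < m) :
    m.choose (i + 1) * r ≤ m.choose i * (m - r) := by
  have key : m.choose (i+1) * (i+1) = m.choose i * (m - i) := Nat.choose_succ_right_eq m i
  have h2 : (m - i) * r ≤ (m - r) * (i+1) := by
    calc (m - i) * r ≤ (m - r) * r := Nat.mul_le_mul_right _ (by omega)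
      _ ≤ (m - r) * (i+1) := Nat.mul_le_mul_left _ (by omega)
  have : (m.choose (i+1) * r) * (i+1) ≤ (m.choose i * (m - r)) * (i+1) := by
    calc (m.choose (i+1) * r) * (i+1) = (m.choose (i+1) * (i+1)) * r := by ring
      _ = m.choose i * ((m - i) * r) := by rw [key]; ring
      _ ≤ m.choose i * ((m - r) * (i+1)) := Nat.mul_le_mul_left _ h2
      _ = (m.choose i * (m - r)) * (i+1) := by ring
  exact Nat.le_of_mul_le_mul_right this (Nat.succ_pos i)

lemma uTerm_step {m r i : ℕ} (him : i < m) (hrm : r < m) :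
    uTerm m r i = ((m.choose i : ℝ) * (1 - (r:ℝ)/m)) * (((r : ℝ)/m)^i * (1 - (r : ℝ)/m)^(m - (i+1)))
    ∧ uTerm m r (i+1) = ((m.choose (i+1) : ℝ) * ((r:ℝ)/m)) * (((r : ℝ)/m)^i * (1 - (r : ℝ)/m)^(m - (i+1))) := by
  constructor
  · unfold uTerm
    have : m - i = (m - (i+1)) + 1 := by omega
    rw [this, pow_succ]
    ring
  · unfold uTerm
    rw [pow_succ]
    ring

lemma uTerm_up {m r i : ℕ} (hi : i + 1 ≤ r) (hrm : r < m) : uTerm m r i ≤ uTerm m r (i+1) := by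
  have hm : 0 < m := by omega
  have hm0 : 0 < (m:ℝ) := by exact_mod_cast hm
  obtain ⟨e1, e2⟩ := uTerm_step (m := m) (r := r) (i := i) (by omega) hrm
  rw [e1, e2]
  have hcom : 0 ≤ ((r : ℝ)/m)^i * (1 - (r : ℝ)/m)^(m - (i+1)) := by
    have h1 : 0 ≤ (r:ℝ)/m := by positivity
    have h2 : 0 ≤ 1 - (r:ℝ)/m := by
      rw [sub_nonneg, div_le_one hm0]; exact_mod_cast hrm.le
    positivity
  apply mul_le_mul_of_nonneg_right _ hcom
  have hkey := choose_ratio_up hi hrm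
  have hcast : ((m.choose i : ℕ) : ℝ) * ((m - r : ℕ) : ℝ) ≤ ((m.choose (i+1) : ℕ) : ℝ) * r := by
    exact_mod_cast hkey
  have hsub : ((m - r : ℕ) : ℝ) = (m : ℝ) - r := by
    rw [Nat.cast_sub hrm.le]
  rw [hsub] at hcast
  have : 1 - (r:ℝ)/m = ((m:ℝ) - r)/m := by field_simp
  rw [this]
  rw [mul_div_assoc', mul_div_assoc']
  exact div_le_div_of_nonneg_right hcast hm0.le

lemma uTerm_down {m r i : ℕ} (hi : r ≤ i) (him : i < m) (hrm : r < m) :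
    uTerm m r (i+1) ≤ uTerm m r i := by
  have hm : 0 < m := by omega
  have hm0 : 0 < (m:ℝ) := by exact_mod_cast hm
  obtain ⟨e1, e2⟩ := uTerm_step (m := m) (r := r) (i := i) him hrm
  rw [e1, e2]
  have hcom : 0 ≤ ((r : ℝ)/m)^i * (1 - (r : ℝ)/m)^(m - (i+1)) := by
    have h1 : 0 ≤ (r:ℝ)/m := by positivity
    have h2 : 0 ≤ 1 - (r:ℝ)/m := by
      rw [sub_nonneg, div_le_one hm0]; exact_mod_cast hrm.le
    positivity
  apply mul_le_mul_of_nonneg_right _ hcom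
  have hkey := choose_ratio_down hi him hrm
  have hcast : ((m.choose (i+1) : ℕ) : ℝ) * r ≤ ((m.choose i : ℕ) : ℝ) * ((m - r : ℕ) : ℝ) := by
    exact_mod_cast hkey
  have hsub : ((m - r : ℕ) : ℝ) = (m : ℝ) - r := by
    rw [Nat.cast_sub hrm.le]
  rw [hsub] at hcast
  have : 1 - (r:ℝ)/m = ((m:ℝ) - r)/m := by field_simp
  rw [this]
  rw [mul_div_assoc', mul_div_assoc']
  exact div_le_div_of_nonneg_right hcast hm0.le

lemma uTerm_le_max {m r : ℕ} (hrm : r < m) : ∀ i, i ≤ m → uTerm m r i ≤ uTerm m r r := by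
  have hup : ∀ d, d ≤ r → uTerm m r (r - d) ≤ uTerm m r r := by
    intro d
    induction d with
    | zero => intro _; simp
    | succ n ih =>
      intro hd
      have h1 : uTerm m r (r - (n+1)) ≤ uTerm m r (r - (n+1) + 1) :=
        uTerm_up (i := r - (n+1)) (by omega) hrm
      have h2 : r - (n+1) + 1 = r - n := by omega
      rw [h2] at h1
      exact h1.trans (ih (by omega))
  have hdown : ∀ i, r ≤ i → i ≤ m → uTerm m r i ≤ uTerm m r r := by
    intro i
    induction i with
    | zero => intro h1 _; have : r = 0 := by omega
              subst this; simp
    | succ n ih =>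
      intro h1 h2
      rcases Nat.lt_or_ge r (n+1) with h | h
      · have := uTerm_down (i := n) (by omega) (by omega) hrm
        exact this.trans (ih (by omega) (by omega))
      · have : r = n + 1 := by omega
        subst this; exact le_refl _
  intro i him
  rcases le_or_gt i r with h | h
  · have := hup (r - i) (by omega)
    have h2 : r - (r - i) = i := by omega
    rwa [h2] at this
  · exact hdown i h.le him

lemma one_le_max_term {m r : ℕ} (hrm : r < m) :
    (1:ℝ) ≤ (m + 1) * uTerm m r r := by
  have hsum : ∑ i ∈ Finset.range (m+1), uTerm m r i = 1 := by
    have h := add_pow ((r:ℝ)/m) (1 - (r:ℝ)/m) m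
    have hx : (r:ℝ)/m + (1 - (r:ℝ)/m) = 1 := by ring
    rw [hx, one_pow] at h
    have h2 : ∑ i ∈ Finset.range (m+1), uTerm m r i
        = ∑ i ∈ Finset.range (m+1), ((r:ℝ)/m)^i * (1-(r:ℝ)/m)^(m-i) * (m.choose i) :=
      Finset.sum_congr rfl (fun i _ => by unfold uTerm; ring)
    rw [h2, ← h]
  have hle : ∑ i ∈ Finset.range (m+1), uTerm m r i ≤ (m+1) * uTerm m r r := by
    have := Finset.sum_le_card_nsmul (Finset.range (m+1)) (uTerm m r) (uTerm m r r)
      (fun i hi => uTerm_le_max hrm i (by simpa using Nat.lt_succ_iff.mp (Finset.mem_range.mp hi)))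
    simpa [nsmul_eq_mul] using this
  linarith [hsum ▸ hle]

example : True := trivial

lemma choose_ge_entropy {m r : ℕ} (hr0 : 0 < r) (hrm : r < m) :
    Real.exp (m * Real.binEntropy ((r:ℝ)/m)) ≤ (m + 1) * (m.choose r : ℝ) := by
  have hm0 : 0 < (m:ℝ) := by exact_mod_cast (by omega : 0 < m)
  set β : ℝ := (r:ℝ)/m with hβdef
  have hβ0 : 0 < β := by positivity
  have hβ1 : β < 1 := by
    rw [hβdef, div_lt_one hm0]; exact_mod_cast hrm
  have h1β : 0 < 1 - β := by linarith
  have hmβ : (m:ℝ) * β = r := by rw [hβdef]; field_simp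
  have hm1β : (m:ℝ) * (1 - β) = ((m - r : ℕ) : ℝ) := by
    rw [Nat.cast_sub hrm.le, mul_sub, mul_one, hmβ]
  have hent : (m:ℝ) * Real.binEntropy β
      = (r:ℕ) * Real.log β⁻¹ + ((m - r : ℕ):ℝ) * Real.log (1-β)⁻¹ := by
    rw [Real.binEntropy]
    rw [mul_add, ← mul_assoc, ← mul_assoc, hmβ, hm1β]
  have hexp : Real.exp ((m:ℝ) * Real.binEntropy β) * (β^r * (1-β)^(m-r)) = 1 := by
    rw [hent, Real.exp_add]
    rw [Real.exp_nat_mul, Real.exp_nat_mul, Real.exp_log (by positivity), Real.exp_log (by positivity)]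
    rw [inv_pow, inv_pow]
    field_simp
  have hmax := one_le_max_term hrm
  unfold uTerm at hmax
  have hE : 0 < Real.exp ((m:ℝ) * Real.binEntropy β) := Real.exp_pos _
  calc Real.exp ((m:ℝ) * Real.binEntropy β)
      = Real.exp ((m:ℝ) * Real.binEntropy β) * 1 := by ring
    _ ≤ Real.exp ((m:ℝ) * Real.binEntropy β) * ((m + 1) * ((m.choose r : ℝ) * β^r * (1-β)^(m-r))) := by
        apply mul_le_mul_of_nonneg_left _ hE.le
        exact_mod_cast hmax
    _ = (m + 1) * (m.choose r : ℝ) * (Real.exp ((m:ℝ) * Real.binEntropy β) * (β^r * (1-β)^(m-r))) := by ring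
    _ = (m + 1) * (m.choose r : ℝ) := by rw [hexp]; ring

lemma choose_le_two_pow' (m r : ℕ) : m.choose r ≤ 2 ^ m := by
  rcases le_or_gt r m with h | h
  · calc m.choose r ≤ ∑ i ∈ Finset.range (m+1), m.choose i :=
        Finset.single_le_sum (f := fun i => m.choose i) (fun i _ => Nat.zero_le _)
          (Finset.mem_range.mpr (by omega))
      _ = 2 ^ m := Nat.sum_range_choose m
  · rw [Nat.choose_eq_zero_of_lt h]; exact Nat.zero_le _

lemma exists_good_center (m r : ℕ) (U : Finset (Fin m → Bool)) :
    ∃ y : Fin m → Bool,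
      (U.card : ℝ) * (m.choose r : ℝ) / 2 ^ m
        ≤ ((U.filter (fun x => hammingDist x y ≤ r)).card : ℝ) := by
  classical
  by_contra hcon
  push_neg at hcon
  have hswapN : ∑ y : Fin m → Bool, (U.filter (fun x => hammingDist x y ≤ r)).card
      = ∑ x ∈ U, (Finset.univ.filter (fun y : Fin m → Bool => hammingDist y x ≤ r)).card := by
    simp only [Finset.card_filter]
    rw [Finset.sum_comm]
    apply Finset.sum_congr rfl
    intro x _
    apply Finset.sum_congr rfl
    intro y _
    rw [hammingDist_comm]
  have hlow : (U.card) * (m.choose r) ≤ ∑ y : Fin m → Bool, (U.filter (fun x => hammingDist x y ≤ r)).card := by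
    rw [hswapN]
    calc U.card * m.choose r = ∑ _x ∈ U, m.choose r := by rw [Finset.sum_const, smul_eq_mul]
      _ ≤ _ := Finset.sum_le_sum (fun x _ => ball_card_ge m r x)
  have hup : (∑ y : Fin m → Bool, ((U.filter (fun x => hammingDist x y ≤ r)).card : ℝ))
      < ∑ _y : Fin m → Bool, ((U.card : ℝ) * (m.choose r : ℝ) / 2 ^ m) := by
    apply Finset.sum_lt_sum_of_nonempty Finset.univ_nonempty
    intro y _
    exact hcon y
  have hcarduniv : ((Finset.univ : Finset (Fin m → Bool)).card : ℝ) = 2 ^ m := by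
    rw [Finset.card_univ]
    simp [Fintype.card_fun]
  rw [Finset.sum_const, nsmul_eq_mul, hcarduniv] at hup
  have h2m : (0:ℝ) < 2 ^ m := by positivity
  have : (2:ℝ)^m * ((U.card : ℝ) * (m.choose r : ℝ) / 2 ^ m) = (U.card : ℝ) * (m.choose r : ℝ) := by
    field_simp
  rw [this] at hup
  have hlowR : ((U.card : ℝ) * (m.choose r : ℝ))
      ≤ ∑ y : Fin m → Bool, ((U.filter (fun x => hammingDist x y ≤ r)).card : ℝ) := by
    push_cast
    exact_mod_cast hlow
  linarith

lemma greedy_cover (m r : ℕ) (k : ℕ) :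
    ∀ (U : Finset (Fin m → Bool)),
      (U.card : ℝ) * (1 - (m.choose r : ℝ) / 2 ^ m) ^ k < 1 →
      ∃ T : Finset (Fin m → Bool), T.card ≤ k ∧
        ∀ x ∈ U, ∃ y ∈ T, hammingDist x y ≤ r := by
  classical
  induction k with
  | zero =>
    intro U hU
    rw [pow_zero, mul_one] at hU
    have : U.card = 0 := by exact_mod_cast Nat.lt_one_iff.mp (by exact_mod_cast hU)
    refine ⟨∅, le_refl _, fun x hx => absurd hx ?_⟩
    simp [Finset.card_eq_zero.mp this]
  | succ k ih =>
    intro U hU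
    obtain ⟨y, hy⟩ := exists_good_center m r U
    set q : ℝ := (m.choose r : ℝ) / 2 ^ m with hq
    have hq1 : q ≤ 1 := by
      rw [hq, div_le_one (by positivity)]
      exact_mod_cast choose_le_two_pow' m r
    have hq0 : 0 ≤ 1 - q := by linarith
    set U' := U.filter (fun x => ¬ hammingDist x y ≤ r) with hU'
    have hsplit : (U.filter (fun x => hammingDist x y ≤ r)).card + U'.card = U.card :=
      Finset.card_filter_add_card_filter_not _
    have hcard' : (U'.card : ℝ) ≤ (U.card : ℝ) * (1 - q) := by
      have h1 : (U'.card : ℝ) = (U.card : ℝ) - ((U.filter (fun x => hammingDist x y ≤ r)).card : ℝ) := by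
        have := hsplit
        push_cast [← this]
        ring
      rw [h1, hq]
      have := hy
      rw [mul_div_assoc] at this
      nlinarith [this]
    have hU'k : (U'.card : ℝ) * (1 - q) ^ k < 1 := by
      calc (U'.card : ℝ) * (1 - q) ^ k
          ≤ ((U.card : ℝ) * (1 - q)) * (1 - q) ^ k :=
            mul_le_mul_of_nonneg_right hcard' (by positivity)
        _ = (U.card : ℝ) * (1 - q) ^ (k+1) := by ring
        _ < 1 := hU
    obtain ⟨T, hT1, hT2⟩ := ih U' hU'k
    refine ⟨insert y T, (Finset.card_insert_le _ _).trans (by omega), ?_⟩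
    intro x hx
    by_cases hd : hammingDist x y ≤ r
    · exact ⟨y, Finset.mem_insert_self _ _, hd⟩
    · obtain ⟨z, hz1, hz2⟩ := hT2 x (Finset.mem_filter.mpr ⟨hx, hd⟩)
      exact ⟨z, Finset.mem_insert_of_mem hz1, hz2⟩

lemma poly_helper (x l : ℝ) (hx : 3 ≤ x) (hl0 : 0 ≤ l) (hl : l ≤ 0.6932) :
    l*x*(x+1)*x^2 + 1 ≤ x^4 := by
  have hx0 : (0:ℝ) ≤ x := by linarith
  have hx3 : (27:ℝ) ≤ x^3 := by nlinarith [sq_nonneg x, sq_nonneg (x-3)]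
  have h1 : 3*x^3 ≤ x^4 := by
    nlinarith [mul_nonneg (pow_nonneg hx0 3) (show (0:ℝ) ≤ x - 3 by linarith)]
  have hs : (0:ℝ) ≤ x^4 + x^3 := by positivity
  have h2 : l*(x^4+x^3) ≤ 0.6932*(x^4+x^3) := mul_le_mul_of_nonneg_right hl hs
  have heq : l*x*(x+1)*x^2 = l*(x^4+x^3) := by ring
  rw [heq]
  linarith

lemma binEnt_eq (p : ℝ) : binEnt p = Real.binEntropy p / Real.log 2 := by
  unfold binEnt Real.binEntropy Real.logb
  rw [Real.log_inv, Real.log_inv]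
  ring

lemma rhs_eq (m : ℕ) (p : ℝ) (hm : 0 < m) :
    (2:ℝ) ^ ((1 - binEnt p) * m + 4 * Real.logb 2 m)
      = Real.exp ((m:ℝ) * Real.log 2 - (m:ℝ) * Real.binEntropy p + 4 * Real.log m) := by
  rw [Real.rpow_def_of_pos (by norm_num)]
  congr 1
  rw [binEnt_eq]
  unfold Real.logb
  have hL : Real.log 2 ≠ 0 := ne_of_gt (Real.log_pos (by norm_num))
  field_simp


/-- Existence of covering codes: for 1/2 < p ≤ 1 - 1/m there is a set
S ⊆ {0,1}^m of size at most 2^{(1-H(p))m + 4 log₂ m} such that every string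
is within Hamming distance (1-p-1/m)·m of some codeword in S. -/
theorem covering_code_exists
    (m : ℕ) (p : ℝ) (hp : 1 / 2 < p) (hp1 : p ≤ 1 - 1 / (m : ℝ)) :
    ∃ S : Finset (Fin m → Bool),
      (S.card : ℝ) ≤ 2 ^ ((1 - binEnt p) * m + 4 * Real.logb 2 m) ∧
      ∀ x : Fin m → Bool, ∃ y ∈ S,
        (hammingDist x y : ℝ) ≤ (1 - p - 1 / (m : ℝ)) * m := by
  classical
  rcases Nat.eq_zero_or_pos m with hm0 | hmpos
  · -- m = 0
    subst hm0
    refine ⟨Finset.univ, ?_, ?_⟩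
    · have h1 : ((Finset.univ : Finset (Fin 0 → Bool)).card : ℝ) = 1 := by
        simp [Finset.card_univ, Fintype.card_fun]
      rw [h1]
      simp only [Nat.cast_zero, Real.logb, Real.log_zero, mul_zero, zero_div, add_zero]
      norm_num
    · intro x
      refine ⟨x, Finset.mem_univ x, ?_⟩
      simp [hammingDist_self]
  · -- m ≥ 1; derive m ≥ 3
    have hm0R : (0:ℝ) < m := by exact_mod_cast hmpos
    have hα1 : 1 / (m:ℝ) ≤ 1 - p := by linarith
    have hαhalf : 1 - p < 1/2 := by linarith
    have hm3 : 3 ≤ m := by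
      by_contra hcon
      push_neg at hcon
      interval_cases m <;> norm_num at hα1 hαhalf <;> linarith
    have hm3R : (3:ℝ) ≤ m := by exact_mod_cast hm3
    set α : ℝ := 1 - p with hαdef
    have hbp : Real.binEntropy α = Real.binEntropy p := Real.binEntropy_one_sub p
    set L : ℝ := Real.log 2 with hLdef
    set lam : ℝ := Real.log m with hlamdef
    have hL0 : 0 < L := Real.log_pos (by norm_num)
    have hlam1 : 1 ≤ lam := by
      have h3 : Real.exp 1 < 3 := by
        have := Real.exp_one_lt_d9
        linarith
      have : Real.log (Real.exp 1) < Real.log 3 := Real.log_lt_log (Real.exp_pos 1) h3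
      rw [Real.log_exp] at this
      have h3m : Real.log 3 ≤ lam := Real.log_le_log (by norm_num) (by exact_mod_cast hm3R)
      linarith
    rw [rhs_eq m p hmpos]
    have hbL : Real.binEntropy p ≤ L := Real.binEntropy_le_log_two
    rcases lt_or_ge α (2 / m) with hsmall | hbig
    · -- degenerate case: take S = univ
      refine ⟨Finset.univ, ?_, ?_⟩
      · have hcard : ((Finset.univ : Finset (Fin m → Bool)).card : ℝ) = 2 ^ m := by
          rw [Finset.card_univ]
          simp [Fintype.card_fun]
        rw [hcard]
        have h2m : (2:ℝ) ^ m = Real.exp ((m:ℝ) * L) := by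
          rw [Real.exp_nat_mul, Real.exp_log (by norm_num)]
        rw [h2m]
        apply Real.exp_le_exp.mpr
        -- need m*b ≤ 4*lam
        have hα0 : 0 < α := by
          have : 0 < 1/(m:ℝ) := by positivity
          linarith
        have hb : Real.binEntropy α = α * Real.log α⁻¹ + (1-α) * Real.log (1-α)⁻¹ := rfl
        have ht1 : (m:ℝ) * (α * Real.log α⁻¹) ≤ 2 * lam := by
          have hma : (m:ℝ) * α ≤ 2 := by
            have := (lt_div_iff₀ hm0R).mp hsmall
            nlinarith
          have hlog1 : Real.log α⁻¹ ≤ lam := by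
            rw [Real.log_inv, hlamdef]
            have : Real.log (1/(m:ℝ)) ≤ Real.log α := by
              apply Real.log_le_log (by positivity) hα1
            rw [Real.log_div one_ne_zero (ne_of_gt hm0R), Real.log_one] at this
            linarith
          have hlog0 : 0 ≤ Real.log α⁻¹ := by
            rw [Real.log_inv]
            apply neg_nonneg.mpr
            apply Real.log_nonpos hα0.le
            linarith
          calc (m:ℝ) * (α * Real.log α⁻¹) = ((m:ℝ)*α) * Real.log α⁻¹ := by ring
            _ ≤ 2 * lam := by
                apply mul_le_mul hma hlog1 hlog0 (by norm_num)
        have ht2 : (m:ℝ) * ((1-α) * Real.log (1-α)⁻¹) ≤ 2 := by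
          have h1α : 0 < 1 - α := by linarith
          have hlog : Real.log (1-α)⁻¹ ≤ α / (1-α) := by
            have := Real.log_le_sub_one_of_pos (x := (1-α)⁻¹) (by positivity)
            have heq : (1-α)⁻¹ - 1 = α / (1-α) := by field_simp; ring
            linarith [heq ▸ this]
          have : (1-α) * Real.log (1-α)⁻¹ ≤ α := by
            calc (1-α) * Real.log (1-α)⁻¹ ≤ (1-α) * (α/(1-α)) := by
                  apply mul_le_mul_of_nonneg_left hlog h1α.le
              _ = α := by field_simp
          have hma : (m:ℝ) * α ≤ 2 := by
            have := (lt_div_iff₀ hm0R).mp hsmall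
            nlinarith
          calc (m:ℝ) * ((1-α) * Real.log (1-α)⁻¹) ≤ (m:ℝ) * α := by
                apply mul_le_mul_of_nonneg_left this hm0R.le
            _ ≤ 2 := hma
        have hmb : (m:ℝ) * Real.binEntropy p ≤ 2 * lam + 2 := by
          rw [← hbp, hb]
          calc (m:ℝ) * (α * Real.log α⁻¹ + (1-α) * Real.log (1-α)⁻¹)
              = (m:ℝ) * (α * Real.log α⁻¹) + (m:ℝ) * ((1-α) * Real.log (1-α)⁻¹) := by ring
            _ ≤ 2 * lam + 2 := add_le_add ht1 ht2
        linarith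
      · intro x
        refine ⟨x, Finset.mem_univ x, ?_⟩
        rw [hammingDist_self]
        push_cast
        have hαr : α = 1 - p := rfl
        have h0 : (0:ℝ) ≤ 1 - p - 1/(m:ℝ) := by linarith
        exact mul_nonneg h0 hm0R.le
    · -- main case: 2/m ≤ α
      set r : ℕ := ⌊(α - 1/(m:ℝ)) * m⌋₊ with hrdef
      have h1mpos : 0 < 1/(m:ℝ) := by positivity
      have hαm : (0:ℝ) ≤ α - 1/m := by
        have h21 : (2:ℝ)/m = 1/m + 1/m := by ring
        linarith
      have hx0 : (0:ℝ) ≤ (α - 1/(m:ℝ)) * m := mul_nonneg hαm hm0R.le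
      have hr1 : 1 ≤ r := by
        apply Nat.le_floor
        push_cast
        have h2 := (div_le_iff₀ hm0R).mp hbig
        have h1m : (1:ℝ)/m * m = 1 := by field_simp
        nlinarith
      have hrm : r < m := by
        rw [hrdef]
        rw [Nat.floor_lt hx0]
        have h1m : 0 < 1/(m:ℝ) := by positivity
        nlinarith
      have hr0 : 0 < r := hr1
      have hrle : (r:ℝ) ≤ (α - 1/(m:ℝ)) * m := Nat.floor_le hx0
      have hrgt : (α - 1/(m:ℝ)) * m - 1 < (r:ℝ) := by
        have h := Nat.lt_floor_add_one ((α - 1/(m:ℝ)) * m)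
        rw [hrdef]
        push_cast
        linarith
      set β : ℝ := (r:ℝ)/m with hβdef
      have hβ1m : 1/(m:ℝ) ≤ β := by
        rw [hβdef]
        gcongr
        exact_mod_cast hr1
      have hβα : β ≤ α - 1/m := by
        rw [hβdef, div_le_iff₀ hm0R]
        exact hrle
      have hβgtα : α - 2/m < β := by
        rw [hβdef, lt_div_iff₀ hm0R]
        have heq : (α - 2/(m:ℝ))*m = (α - 1/(m:ℝ))*m - 1 := by field_simp; ring
        linarith
      have hβpos : 0 < β := lt_of_lt_of_le h1mpos hβ1m
      have hβhalf : β < 1/2 := by linarith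
      have hβltα : β < α := by linarith
      -- entropy comparison via MVT
      obtain ⟨c, hc, hcder⟩ := exists_deriv_eq_slope Real.binEntropy hβltα
        (Real.binEntropy_continuous.continuousOn)
        (fun x hx => (Real.differentiableAt_binEntropy
          (ne_of_gt (lt_trans hβpos hx.1)) (ne_of_lt (by linarith [hx.2]))).differentiableWithinAt)
      rw [Real.deriv_binEntropy] at hcder
      have hc0 : 0 < c := lt_trans hβpos hc.1
      have hcα : c < α := hc.2
      have hslope : Real.log (1 - c) - Real.log c ≤ lam := by
        have h1 : Real.log (1 - c) ≤ 0 := Real.log_nonpos (by linarith) (by linarith)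
        have h2 : -Real.log c ≤ lam := by
          have h3 : Real.log (1/(m:ℝ)) ≤ Real.log c :=
            Real.log_le_log (by positivity) (le_of_lt (lt_of_le_of_lt hβ1m hc.1))
          rw [Real.log_div one_ne_zero (ne_of_gt hm0R), Real.log_one] at h3
          linarith
        linarith
      have hdiff : Real.binEntropy α - Real.binEntropy β
          = (α - β) * (Real.log (1-c) - Real.log c) := by
        rw [eq_div_iff (ne_of_gt (sub_pos.mpr hβltα))] at hcder
        linarith [hcder]
      have hent : (m:ℝ) * Real.binEntropy p - 2*lam ≤ (m:ℝ) * Real.binEntropy β := by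
        have hαβ2 : α - β < 2/m := by linarith
        have hlam0 : 0 ≤ lam := by linarith
        have hstep : Real.binEntropy α - Real.binEntropy β ≤ (2/m) * lam := by
          rw [hdiff]
          calc (α - β) * (Real.log (1-c) - Real.log c) ≤ (α - β) * lam := by
                apply mul_le_mul_of_nonneg_left hslope (by linarith)
            _ ≤ (2/m) * lam := mul_le_mul_of_nonneg_right hαβ2.le hlam0
        have h3 := mul_le_mul_of_nonneg_left hstep hm0R.le
        rw [mul_sub] at h3
        have h4 : (m:ℝ) * ((2/m) * lam) = 2*lam := by field_simp
        rw [h4] at h3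
        rw [hbp] at h3
        linarith
      -- covering code construction
      set V : ℝ := (m.choose r : ℝ) with hVdef
      have hVpos : 0 < V := by
        rw [hVdef]
        exact_mod_cast Nat.choose_pos (le_of_lt hrm)
      have hchoose : Real.exp ((m:ℝ) * Real.binEntropy β) ≤ ((m:ℝ) + 1) * V :=
        choose_ge_entropy hr0 hrm
      set q : ℝ := V / 2^m with hqdef
      have hqpos : 0 < q := by positivity
      have hq1 : q ≤ 1 := by
        rw [hqdef, div_le_one (by positivity)]
        rw [hVdef]
        exact_mod_cast choose_le_two_pow' m r
      set k : ℕ := ⌊(m:ℝ) * L / q⌋₊ + 1 with hkdef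
      have hcarduniv : ((Finset.univ : Finset (Fin m → Bool)).card : ℝ) = 2^m := by
        rw [Finset.card_univ]
        simp [Fintype.card_fun]
      have hcov : ((Finset.univ : Finset (Fin m → Bool)).card : ℝ) * (1 - q)^k < 1 := by
        rw [hcarduniv]
        have hk : (m:ℝ)*L/q < (k:ℕ) := by
          rw [hkdef]
          push_cast
          exact Nat.lt_floor_add_one _
        have hqk : (m:ℝ)*L < q * k := by
          calc (m:ℝ)*L = q * ((m:ℝ)*L/q) := by field_simp
            _ < q * k := by exact mul_lt_mul_of_pos_left hk hqpos
        have h1q : (1 - q)^k ≤ Real.exp (-(q*(k:ℝ))) := by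
          have base : 1 - q ≤ Real.exp (-q) := by linarith [Real.add_one_le_exp (-q)]
          calc (1-q)^k ≤ (Real.exp (-q))^k := pow_le_pow_left₀ (by linarith) base k
            _ = Real.exp (-(q*(k:ℝ))) := by
                rw [← Real.exp_nat_mul]
                congr 1
                ring
        calc (2:ℝ)^m * (1-q)^k ≤ 2^m * Real.exp (-(q*(k:ℝ))) :=
              mul_le_mul_of_nonneg_left h1q (by positivity)
          _ < 2^m * Real.exp (-((m:ℝ)*L)) := by
              apply mul_lt_mul_of_pos_left _ (by positivity)
              exact Real.exp_lt_exp.mpr (by linarith)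
          _ = 1 := by
              rw [Real.exp_neg, Real.exp_nat_mul, Real.exp_log (by norm_num)]
              field_simp
      obtain ⟨S, hS1, hS2⟩ := greedy_cover m r k Finset.univ hcov
      refine ⟨S, ?_, ?_⟩
      · -- cardinality bound
        have hSk : (S.card:ℝ) ≤ (k:ℕ) := by exact_mod_cast hS1
        have hkb : ((k:ℕ):ℝ) ≤ (m:ℝ)*L/q + 1 := by
          rw [hkdef]
          push_cast
          linarith [Nat.floor_le (show (0:ℝ) ≤ (m:ℝ)*L/q by positivity)]
        have hq2 : (m:ℝ)*L/q = (m:ℝ)*L*2^m/V := by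
          rw [hqdef]
          field_simp
        have hV2 : 1 / V ≤ ((m:ℝ)+1) * Real.exp (-((m:ℝ)*Real.binEntropy β)) := by
          rw [div_le_iff₀ hVpos]
          have hEpos : (0:ℝ) < Real.exp ((m:ℝ)*Real.binEntropy β) := Real.exp_pos _
          have hmul := mul_le_mul_of_nonneg_right hchoose
            (le_of_lt (Real.exp_pos (-((m:ℝ)*Real.binEntropy β))))
          rw [← Real.exp_add, add_neg_cancel, Real.exp_zero] at hmul
          nlinarith [hmul]
        have hVinv : (m:ℝ)*L*2^m/V
            ≤ (m:ℝ)*L*2^m*(((m:ℝ)+1)*Real.exp (-((m:ℝ)*Real.binEntropy β))) := by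
          have hcoef : (0:ℝ) ≤ (m:ℝ)*L*2^m := by positivity
          calc (m:ℝ)*L*2^m/V = ((m:ℝ)*L*2^m) * (1/V) := by ring
            _ ≤ ((m:ℝ)*L*2^m) * (((m:ℝ)+1)*Real.exp (-((m:ℝ)*Real.binEntropy β))) :=
                mul_le_mul_of_nonneg_left hV2 hcoef
        have hexp2 : Real.exp (-((m:ℝ)*Real.binEntropy β))
            ≤ Real.exp (-((m:ℝ)*Real.binEntropy p)) * (m:ℝ)^2 := by
          have hle : -((m:ℝ)*Real.binEntropy β) ≤ -((m:ℝ)*Real.binEntropy p) + 2*lam := by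
            linarith
          calc Real.exp (-((m:ℝ)*Real.binEntropy β))
              ≤ Real.exp (-((m:ℝ)*Real.binEntropy p) + 2*lam) := Real.exp_le_exp.mpr hle
            _ = Real.exp (-((m:ℝ)*Real.binEntropy p)) * (m:ℝ)^2 := by
                rw [Real.exp_add]
                congr 1
                rw [show (2:ℝ)*lam = ((2:ℕ):ℝ)*lam by norm_num, Real.exp_nat_mul,
                  hlamdef, Real.exp_log hm0R]
        have hE1 : (1:ℝ) ≤ 2^m * Real.exp (-((m:ℝ)*Real.binEntropy p)) := by
          have h2e : (2:ℝ)^m = Real.exp ((m:ℝ)*L) := by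
            rw [hLdef, Real.exp_nat_mul, Real.exp_log (by norm_num)]
          rw [h2e, ← Real.exp_add]
          apply Real.one_le_exp
          have := mul_le_mul_of_nonneg_left hbL hm0R.le
          linarith
        have hL' : L ≤ 0.6932 := by
          rw [hLdef]
          linarith [Real.log_two_lt_d9]
        have hpoly : L*(m:ℝ)*((m:ℝ)+1)*(m:ℝ)^2 + 1 ≤ (m:ℝ)^4 :=
          poly_helper (m:ℝ) L hm3R hL0.le hL'
        have hRHSexp : Real.exp ((m:ℝ)*L - (m:ℝ)*Real.binEntropy p + 4*lam)
            = 2^m * Real.exp (-((m:ℝ)*Real.binEntropy p)) * (m:ℝ)^4 := by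
          rw [show (m:ℝ)*L - (m:ℝ)*Real.binEntropy p + 4*lam
            = (m:ℝ)*L + (-((m:ℝ)*Real.binEntropy p)) + 4*lam by ring]
          rw [Real.exp_add, Real.exp_add]
          congr 1
          · congr 1
            rw [hLdef, Real.exp_nat_mul, Real.exp_log (by norm_num)]
          · rw [show (4:ℝ)*lam = ((4:ℕ):ℝ)*lam by norm_num, Real.exp_nat_mul,
              hlamdef, Real.exp_log hm0R]
        have hfinal : (m:ℝ)*L*2^m*(((m:ℝ)+1)*(Real.exp (-((m:ℝ)*Real.binEntropy p))*(m:ℝ)^2)) + 1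
            ≤ 2^m * Real.exp (-((m:ℝ)*Real.binEntropy p)) * (m:ℝ)^4 := by
          have hC : L*(m:ℝ)*((m:ℝ)+1)*(m:ℝ)^2 ≤ (m:ℝ)^4 - 1 := by linarith
          have hE0 : (0:ℝ) ≤ 2^m * Real.exp (-((m:ℝ)*Real.binEntropy p)) := by positivity
          have h6 := mul_le_mul_of_nonneg_right hC hE0
          have heq : (m:ℝ)*L*2^m*(((m:ℝ)+1)*(Real.exp (-((m:ℝ)*Real.binEntropy p))*(m:ℝ)^2))
              = (L*(m:ℝ)*((m:ℝ)+1)*(m:ℝ)^2) * (2^m * Real.exp (-((m:ℝ)*Real.binEntropy p))) := by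
            ring
          have heq2 : 2^m * Real.exp (-((m:ℝ)*Real.binEntropy p)) * (m:ℝ)^4
              = ((m:ℝ)^4) * (2^m * Real.exp (-((m:ℝ)*Real.binEntropy p))) := by ring
          rw [heq, heq2]
          have h7 : ((m:ℝ)^4 - 1) * (2^m * Real.exp (-((m:ℝ)*Real.binEntropy p))) + 1
              ≤ ((m:ℝ)^4) * (2^m * Real.exp (-((m:ℝ)*Real.binEntropy p))) := by
            linarith [hE1]
          linarith [h6, h7]
        have hmono : (m:ℝ)*L*2^m*(((m:ℝ)+1)*Real.exp (-((m:ℝ)*Real.binEntropy β)))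
            ≤ (m:ℝ)*L*2^m*(((m:ℝ)+1)*(Real.exp (-((m:ℝ)*Real.binEntropy p))*(m:ℝ)^2)) := by
          apply mul_le_mul_of_nonneg_left _ (by positivity : (0:ℝ) ≤ (m:ℝ)*L*2^m)
          apply mul_le_mul_of_nonneg_left hexp2 (by positivity)
        rw [hRHSexp]
        calc (S.card:ℝ) ≤ (k:ℕ) := hSk
          _ ≤ (m:ℝ)*L/q + 1 := hkb
          _ = (m:ℝ)*L*2^m/V + 1 := by rw [hq2]
          _ ≤ (m:ℝ)*L*2^m*(((m:ℝ)+1)*Real.exp (-((m:ℝ)*Real.binEntropy β))) + 1 := by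
              linarith [hVinv]
          _ ≤ (m:ℝ)*L*2^m*(((m:ℝ)+1)*(Real.exp (-((m:ℝ)*Real.binEntropy p))*(m:ℝ)^2)) + 1 := by
              linarith [hmono]
          _ ≤ 2^m * Real.exp (-((m:ℝ)*Real.binEntropy p)) * (m:ℝ)^4 := hfinal
      · -- coverage
        intro x
        obtain ⟨y, hy1, hy2⟩ := hS2 x (Finset.mem_univ x)
        refine ⟨y, hy1, ?_⟩
        have hd : (hammingDist x y : ℝ) ≤ (r:ℝ) := by exact_mod_cast hy2
        have hαr : α = 1 - p := rfl
        calc (hammingDist x y : ℝ) ≤ (r:ℝ) := hd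
          _ ≤ (α - 1/(m:ℝ)) * m := hrle
          _ = (1 - p - 1/(m:ℝ)) * m := by rw [hαr]
end

section
/- Let S ⊆ {0,1}^m and let S(x) denote a closest codeword to x in Hamming distance, with d(x, S(x)) ≤ (1-q)m for all x, where q > 1/2. Let π be a uniformly random permutation of {1,...,m} and r a uniformly random string in {0,1}^m, and define S_{π,r}(x) = π^{-1}(S(π(x+r))) + r, where + is bitwise XOR and π permutes coordinates. Then for every x ∈ {0,1}^m and every coordinate i, Prob_{π,r}[S_{π,r}(x)_i ≠ x_i] ≤ 1 - q, and moreover this probability is the same for all x and i. -/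
/-- The action of a permutation on a string: (π·x)_j = x_{π(j)}. -/
def permAct {m : ℕ} (π : Equiv.Perm (Fin m)) (x : Fin m → Bool) :
    Fin m → Bool := fun j => x (π j)

/-- The randomized covering-code encoding S_{π,r}(x) = π⁻¹(S(π(x+r))) + r. -/
def randEnc {m : ℕ} (dec : (Fin m → Bool) → (Fin m → Bool))
    (π : Equiv.Perm (Fin m)) (r : Fin m → Bool) (x : Fin m → Bool) :
    Fin m → Bool :=
  fun j => xor (permAct π.symm (dec (permAct π (fun k => xor (x k) (r k)))) j)
    (r j)

/-- The symmetrized count: number of pairs (π, y) with dec y disagreeing with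
y at coordinate π⁻¹ i. -/
def cnt {m : ℕ} (dec : (Fin m → Bool) → (Fin m → Bool)) (i : Fin m) : ℕ :=
  (Finset.univ.filter fun pr : Equiv.Perm (Fin m) × (Fin m → Bool) =>
    dec pr.2 (pr.1.symm i) ≠ pr.2 (pr.1.symm i)).card

/-- The bijection (π, r) ↦ (π, π·(x+r)). -/
def symEquiv {m : ℕ} (x : Fin m → Bool) :
    (Equiv.Perm (Fin m) × (Fin m → Bool)) ≃ (Equiv.Perm (Fin m) × (Fin m → Bool)) where
  toFun pr := (pr.1, fun k => xor (x (pr.1 k)) (pr.2 (pr.1 k)))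
  invFun pr := (pr.1, fun k => xor (x k) (pr.2 (pr.1.symm k)))
  left_inv pr := by
    refine Prod.ext rfl ?_
    funext k
    simp only [Equiv.apply_symm_apply]
    cases x k <;> cases pr.2 k <;> rfl
  right_inv pr := by
    refine Prod.ext rfl ?_
    funext k
    simp only [Equiv.symm_apply_apply]
    cases x (pr.1 k) <;> cases pr.2 k <;> rfl

lemma count_eq {m : ℕ} (dec : (Fin m → Bool) → (Fin m → Bool))
    (x : Fin m → Bool) (i : Fin m) :
    (Finset.univ.filter fun pr : Equiv.Perm (Fin m) × (Fin m → Bool) =>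
        randEnc dec pr.1 pr.2 x i ≠ x i).card = cnt dec i := by
  refine Finset.card_equiv (symEquiv x) fun pr => ?_
  have hP : permAct pr.1 (fun k => xor (x k) (pr.2 k))
      = fun k => xor (x (pr.1 k)) (pr.2 (pr.1 k)) := rfl
  simp only [Finset.mem_filter, Finset.mem_univ, true_and]
  simp only [Finset.mem_filter, Finset.mem_univ, true_and, symEquiv, Equiv.coe_fn_mk,
    randEnc, hP, permAct, Equiv.apply_symm_apply]
  set a := dec (fun k => xor (x (pr.1 k)) (pr.2 (pr.1 k))) (pr.1.symm i) with ha
  cases a <;> cases x i <;> cases pr.2 i <;> simp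

lemma cnt_indep {m : ℕ} (dec : (Fin m → Bool) → (Fin m → Bool)) (i i' : Fin m) :
    cnt dec i = cnt dec i' := by
  unfold cnt
  refine Finset.card_equiv
    ((Equiv.mulLeft (Equiv.swap i' i)).prodCongr (Equiv.refl _)) fun pr => ?_
  simp only [Finset.mem_filter, Finset.mem_univ, true_and, Equiv.prodCongr_apply,
    Equiv.coe_refl, Prod.map, Equiv.coe_mulLeft, id]
  have : (Equiv.swap i' i * pr.1).symm i' = pr.1.symm i := by
    simp [Equiv.Perm.mul_def, Equiv.symm_trans_apply, Equiv.swap_apply_left]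
  rw [this]

lemma cnt_sum {m : ℕ} (dec : (Fin m → Bool) → (Fin m → Bool)) (i : Fin m) :
    m * cnt dec i
      = (Fintype.card (Equiv.Perm (Fin m)))
          * ∑ y : Fin m → Bool, hammingDist y (dec y) := by
  have hsum : ∀ i' : Fin m, cnt dec i'
      = ∑ π : Equiv.Perm (Fin m),
          (Finset.univ.filter fun y : Fin m → Bool =>
            dec y (π.symm i') ≠ y (π.symm i')).card := by
    intro i'
    unfold cnt
    rw [Finset.card_filter, Fintype.sum_prod_type]
    refine Finset.sum_congr rfl fun π _ => ?_
    rw [Finset.card_filter]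
  calc m * cnt dec i = ∑ _i' : Fin m, cnt dec i := by
        simp [Finset.sum_const, Finset.card_univ]
    _ = ∑ i' : Fin m, cnt dec i' :=
        Finset.sum_congr rfl fun i' _ => cnt_indep dec i i'
    _ = ∑ π : Equiv.Perm (Fin m), ∑ i' : Fin m,
          (Finset.univ.filter fun y : Fin m → Bool =>
            dec y (π.symm i') ≠ y (π.symm i')).card := by
        rw [Finset.sum_comm]
        exact Finset.sum_congr rfl fun i' _ => hsum i'
    _ = ∑ π : Equiv.Perm (Fin m), ∑ j : Fin m,
          (Finset.univ.filter fun y : Fin m → Bool =>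
            dec y j ≠ y j).card :=
        Finset.sum_congr rfl fun π _ => Equiv.sum_comp π.symm
          (fun j => (Finset.univ.filter fun y : Fin m → Bool => dec y j ≠ y j).card)
    _ = (Fintype.card (Equiv.Perm (Fin m)))
          * ∑ y : Fin m → Bool, hammingDist y (dec y) := by
        rw [Finset.sum_const, Finset.card_univ, smul_eq_mul]
        congr 1
        simp only [Finset.card_filter]
        rw [Finset.sum_comm]
        refine Finset.sum_congr rfl fun y _ => ?_
        rw [← Finset.card_filter, hammingDist_comm]
        rfl

/-- Symmetrization: if every string is within Hamming distance (1-q)m of its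
codeword, then for uniformly random π and r, each coordinate of S_{π,r}(x)
disagrees with x with probability at most 1-q, and this probability is
independent of x and of the coordinate. -/
theorem randomized_code_coordinate_error
    (m : ℕ) (q : ℝ) (hq : 1 / 2 < q)
    (dec : (Fin m → Bool) → (Fin m → Bool))
    (hdec : ∀ x, (hammingDist x (dec x) : ℝ) ≤ (1 - q) * m) :
    (∀ (x : Fin m → Bool) (i : Fin m),
      ((Finset.univ.filter fun pr : Equiv.Perm (Fin m) × (Fin m → Bool) =>
          randEnc dec pr.1 pr.2 x i ≠ x i).card : ℝ)
        ≤ (1 - q) *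
            (Fintype.card (Equiv.Perm (Fin m) × (Fin m → Bool)) : ℝ)) ∧
    (∀ (x x' : Fin m → Bool) (i i' : Fin m),
      (Finset.univ.filter fun pr : Equiv.Perm (Fin m) × (Fin m → Bool) =>
          randEnc dec pr.1 pr.2 x i ≠ x i).card =
      (Finset.univ.filter fun pr : Equiv.Perm (Fin m) × (Fin m → Bool) =>
          randEnc dec pr.1 pr.2 x' i' ≠ x' i').card) := by
  constructor
  · intro x i
    rw [count_eq]
    have hm : (0 : ℝ) < m := by exact_mod_cast i.pos
    have key' : (m : ℝ) * cnt dec i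
        = (Fintype.card (Equiv.Perm (Fin m)))
            * ∑ y : Fin m → Bool, (hammingDist y (dec y) : ℝ) := by
      exact_mod_cast congrArg (Nat.cast (R := ℝ)) (cnt_sum dec i)
    have hbound : (∑ y : Fin m → Bool, (hammingDist y (dec y) : ℝ))
        ≤ (Fintype.card (Fin m → Bool)) * ((1 - q) * m) := by
      calc (∑ y : Fin m → Bool, (hammingDist y (dec y) : ℝ))
          ≤ ∑ _y : Fin m → Bool, (1 - q) * m :=
            Finset.sum_le_sum fun y _ => hdec y
        _ = (Fintype.card (Fin m → Bool)) * ((1 - q) * m) := by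
            simp [Finset.sum_const, Finset.card_univ]
    rw [← mul_le_mul_iff_right₀ hm]
    calc (m : ℝ) * cnt dec i
        = (Fintype.card (Equiv.Perm (Fin m)))
            * ∑ y : Fin m → Bool, (hammingDist y (dec y) : ℝ) := key'
      _ ≤ (Fintype.card (Equiv.Perm (Fin m)))
            * ((Fintype.card (Fin m → Bool)) * ((1 - q) * m)) :=
          mul_le_mul_of_nonneg_left hbound (by positivity)
      _ = m * ((1 - q) * (Fintype.card (Equiv.Perm (Fin m) × (Fin m → Bool)) : ℝ)) := by
          rw [Fintype.card_prod]
          push_cast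
          ring
  · intro x x' i i'
    rw [count_eq, count_eq, cnt_indep dec i i']
end
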